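/- arXiv:2511.17830 — 2 statements merged into one kernel-verified Lean document; each statement's English description precedes it below -/
import Mathlib

section
/- Let ξ > 1. Every classical solution ζ of the perturbed delayed ZK system with source f = −ζ ∂ₓζ (i.e. of ∂ₜζ + α ∂ₓ³ζ + γ ∂ₓ∂ᵧ²ζ + ζ ∂ₓζ + a ζ + b(ξ ζ + ζ(·,·,t−h)) = 0) satisfies, for all t > 0, (d/dt)E_ξ(t) ≤ −(α/2)∫₀^L (∂ₓζ(0,y,t))² dy − (γ/2)∫₀^L (∂ᵧζ(0,y,t))² dy − ∫_Ω a ζ(x,y,t)² dx dy − ((ξ−1)/2)∫_Ω b ζ(x,y,t)² dx dy − ((ξ−1)/2)∫_Ω b ζ(x,y,t−h)² dx dy ≤ 0; in particular the energy E_ξ is non-increasing. -/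
open MeasureTheory intervalIntegral Set

noncomputable section

/-- Partial derivative in time. -/
def pT (ζ : ℝ → ℝ → ℝ → ℝ) (x y t : ℝ) : ℝ := deriv (fun τ => ζ x y τ) t
/-- Partial derivative in `x`. -/
def pX (ζ : ℝ → ℝ → ℝ → ℝ) (x y t : ℝ) : ℝ := deriv (fun s => ζ s y t) x
/-- Third partial derivative in `x`. -/
def pX3 (ζ : ℝ → ℝ → ℝ → ℝ) (x y t : ℝ) : ℝ := iteratedDeriv 3 (fun s => ζ s y t) x
/-- Partial derivative in `y`. -/
def pY (ζ : ℝ → ℝ → ℝ → ℝ) (x y t : ℝ) : ℝ := deriv (fun r => ζ x r t) y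
/-- Mixed derivative `∂ₓ∂ᵧ²`. -/
def pXYY (ζ : ℝ → ℝ → ℝ → ℝ) (x y t : ℝ) : ℝ :=
  deriv (fun s => iteratedDeriv 2 (fun r => ζ s r t) y) x

/-- Smoothness of a function of three real variables. -/
def Smooth3 (ζ : ℝ → ℝ → ℝ → ℝ) : Prop :=
  ContDiff ℝ (⊤ : ℕ∞) (fun p : ℝ × ℝ × ℝ => ζ p.1 p.2.1 p.2.2)

/-- Boundary conditions of the ZK-type systems on `Ω = (0,L)×(0,L)`. -/
def ZKbc (L : ℝ) (ζ : ℝ → ℝ → ℝ → ℝ) : Prop :=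
  ∀ t > (0:ℝ),
    (∀ y ∈ Ioo (0:ℝ) L,
      ζ 0 y t = 0 ∧ ζ L y t = 0 ∧ pX ζ L y t = 0 ∧ pY ζ L y t = 0) ∧
    (∀ x ∈ Ioo (0:ℝ) L, ζ x 0 t = 0 ∧ ζ x L t = 0)

/-- `M` is the essential supremum of `f` on `Ω = (0,L)×(0,L)`:
the greatest lower bound of the set of a.e. upper bounds. -/
def IsEssSupOn (L : ℝ) (f : ℝ → ℝ → ℝ) (M : ℝ) : Prop :=
  IsGLB {c : ℝ | ∀ᵐ p ∂(volume.restrict (Ioo (0:ℝ) L ×ˢ Ioo (0:ℝ) L)),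
    f p.1 p.2 ≤ c} M

/-- Bounded, nonnegative, measurable coefficient. -/
def Coeff (f : ℝ → ℝ → ℝ) : Prop :=
  Measurable (fun p : ℝ × ℝ => f p.1 p.2) ∧ (∀ x y, 0 ≤ f x y) ∧ ∃ M, ∀ x y, f x y ≤ M

/-- Squared `H`-norm of an initial state, with weight `w` on the delay component. -/
def Hn2 (L w : ℝ) (f : ℝ → ℝ → ℝ) (g : ℝ → ℝ → ℝ → ℝ) : ℝ :=
  (∫ x in (0:ℝ)..L, ∫ y in (0:ℝ)..L, (f x y)^2)
  + w * (∫ x in (0:ℝ)..L, ∫ y in (0:ℝ)..L, ∫ ρ in (0:ℝ)..1, (g x y ρ)^2)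

/-- `L²(Ω)` norm of `w(·,·,t)`. -/
def L2n (L : ℝ) (w : ℝ → ℝ → ℝ → ℝ) (t : ℝ) : ℝ :=
  Real.sqrt (∫ x in (0:ℝ)..L, ∫ y in (0:ℝ)..L, (w x y t)^2)

/-- Squared `H¹(Ω)` norm of `w(·,·,t)`. -/
def H1n2 (L : ℝ) (w : ℝ → ℝ → ℝ → ℝ) (t : ℝ) : ℝ :=
  ∫ x in (0:ℝ)..L, ∫ y in (0:ℝ)..L,
    ((w x y t)^2 + (pX w x y t)^2 + (pY w x y t)^2)

/-- Classical solution of the delayed ZK system. -/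
def IsZKSol (L α γ h : ℝ) (a b : ℝ → ℝ → ℝ) (ζ : ℝ → ℝ → ℝ → ℝ) : Prop :=
  Smooth3 ζ ∧ ZKbc L ζ ∧
  ∀ x ∈ Ioo (0:ℝ) L, ∀ y ∈ Ioo (0:ℝ) L, ∀ t > (0:ℝ),
    pT ζ x y t + α * pX3 ζ x y t + γ * pXYY ζ x y t + ζ x y t * pX ζ x y t
      + a x y * ζ x y t + b x y * ζ x y (t - h) = 0

/-- Energy of the delayed ZK system. -/
def zkE (L h : ℝ) (b : ℝ → ℝ → ℝ) (ζ : ℝ → ℝ → ℝ → ℝ) (t : ℝ) : ℝ :=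
  (1/2) * (∫ x in (0:ℝ)..L, ∫ y in (0:ℝ)..L, (ζ x y t)^2)
  + (h/2) * (∫ x in (0:ℝ)..L, ∫ y in (0:ℝ)..L, ∫ ρ in (0:ℝ)..1,
      b x y * (ζ x y (t - ρ*h))^2)

/-- Classical solution of the (nonlinear) μ-system. -/
def IsMuSol (L α γ h μ₁ μ₂ : ℝ) (a : ℝ → ℝ → ℝ) (ζ : ℝ → ℝ → ℝ → ℝ) : Prop :=
  Smooth3 ζ ∧ ZKbc L ζ ∧
  ∀ x ∈ Ioo (0:ℝ) L, ∀ y ∈ Ioo (0:ℝ) L, ∀ t > (0:ℝ),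
    pT ζ x y t + α * pX3 ζ x y t + γ * pXYY ζ x y t + ζ x y t * pX ζ x y t
      + a x y * (μ₁ * ζ x y t + μ₂ * ζ x y (t - h)) = 0

/-- Classical solution of the linear μ-system with source `f`. -/
def IsLinMuSolF (L α γ h μ₁ μ₂ : ℝ) (a : ℝ → ℝ → ℝ) (f : ℝ → ℝ → ℝ → ℝ)
    (ζ : ℝ → ℝ → ℝ → ℝ) : Prop :=
  Smooth3 ζ ∧ ZKbc L ζ ∧
  ∀ x ∈ Ioo (0:ℝ) L, ∀ y ∈ Ioo (0:ℝ) L, ∀ t > (0:ℝ),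
    pT ζ x y t + α * pX3 ζ x y t + γ * pXYY ζ x y t
      + a x y * (μ₁ * ζ x y t + μ₂ * ζ x y (t - h)) = f x y t

/-- Classical solution of the linear μ-system. -/
def IsLinMuSol (L α γ h μ₁ μ₂ : ℝ) (a : ℝ → ℝ → ℝ) (ζ : ℝ → ℝ → ℝ → ℝ) : Prop :=
  IsLinMuSolF L α γ h μ₁ μ₂ a (fun _ _ _ => 0) ζ

/-- Energy of the μ-system. -/
def muE (L h ξ : ℝ) (a : ℝ → ℝ → ℝ) (ζ : ℝ → ℝ → ℝ → ℝ) (t : ℝ) : ℝ :=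
  (1/2) * (∫ x in (0:ℝ)..L, ∫ y in (0:ℝ)..L, (ζ x y t)^2)
  + (ξ/2) * (∫ x in (0:ℝ)..L, ∫ y in (0:ℝ)..L, ∫ ρ in (0:ℝ)..1,
      a x y * (ζ x y (t - ρ*h))^2)

/-- Classical solution of the perturbed delayed ZK system with source `f`. -/
def IsPertSol (L α γ h ξ : ℝ) (a b : ℝ → ℝ → ℝ) (f : ℝ → ℝ → ℝ → ℝ)
    (ζ : ℝ → ℝ → ℝ → ℝ) : Prop :=
  Smooth3 ζ ∧ ZKbc L ζ ∧
  ∀ x ∈ Ioo (0:ℝ) L, ∀ y ∈ Ioo (0:ℝ) L, ∀ t > (0:ℝ),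
    pT ζ x y t + α * pX3 ζ x y t + γ * pXYY ζ x y t
      + a x y * ζ x y t + b x y * (ξ * ζ x y t + ζ x y (t - h)) = f x y t

/-- Energy `E_ξ` of the perturbed delayed ZK system. -/
def pertE (L h ξ : ℝ) (b : ℝ → ℝ → ℝ) (ζ : ℝ → ℝ → ℝ → ℝ) (t : ℝ) : ℝ :=
  (1/2) * (∫ x in (0:ℝ)..L, ∫ y in (0:ℝ)..L, (ζ x y t)^2)
  + (ξ*h/2) * (∫ x in (0:ℝ)..L, ∫ y in (0:ℝ)..L, ∫ ρ in (0:ℝ)..1,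
      b x y * (ζ x y (t - ρ*h))^2)
/-- Dissipation rate appearing in Statement 9. -/
def D9 (L α γ h ξ : ℝ) (a b : ℝ → ℝ → ℝ) (ζ : ℝ → ℝ → ℝ → ℝ) (t : ℝ) : ℝ :=
  (α/2) * (∫ y in (0:ℝ)..L, (pX ζ 0 y t)^2)
  + (γ/2) * (∫ y in (0:ℝ)..L, (pY ζ 0 y t)^2)
  + (∫ x in (0:ℝ)..L, ∫ y in (0:ℝ)..L, a x y * (ζ x y t)^2)
  + ((ξ-1)/2) * (∫ x in (0:ℝ)..L, ∫ y in (0:ℝ)..L, b x y * (ζ x y t)^2)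
  + ((ξ-1)/2) * (∫ x in (0:ℝ)..L, ∫ y in (0:ℝ)..L, b x y * (ζ x y (t-h))^2)

/-! ### Auxiliary library -/

/-- Directional derivative operator on functions `ℝ×ℝ×ℝ → ℝ`. -/
def PD (v : ℝ × ℝ × ℝ) (W : ℝ × ℝ × ℝ → ℝ) : ℝ × ℝ × ℝ → ℝ :=
  fun p => fderiv ℝ W p v

lemma PD_contDiff {W : ℝ × ℝ × ℝ → ℝ} (hW : ContDiff ℝ (⊤ : ℕ∞) W) (v : ℝ × ℝ × ℝ) :
    ContDiff ℝ (⊤ : ℕ∞) (PD v W) := by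
  have h1 : ContDiff ℝ (⊤ : ℕ∞) (fun p => fderiv ℝ W p) :=
    hW.fderiv_right (le_refl _)
  exact h1.clm_apply contDiff_const

/-- slice in x -/
lemma hasDerivAt_sliceX {W : ℝ × ℝ × ℝ → ℝ} (hW : ContDiff ℝ (⊤ : ℕ∞) W) (x y t : ℝ) :
    HasDerivAt (fun s => W (s, y, t)) (PD (1,0,0) W (x, y, t)) x := by
  have hι : HasDerivAt (fun s : ℝ => ((s, y, t) : ℝ × ℝ × ℝ)) ((1:ℝ),(0:ℝ),(0:ℝ)) x :=
    HasDerivAt.prodMk (hasDerivAt_id x) (HasDerivAt.prodMk (hasDerivAt_const x y) (hasDerivAt_const x t))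
  have hWd : HasFDerivAt W (fderiv ℝ W (x, y, t)) (x, y, t) :=
    (hW.differentiable (by simp) (x, y, t)).hasFDerivAt
  simpa [PD, Function.comp_def] using hWd.comp_hasDerivAt x hι

lemma hasDerivAt_sliceY {W : ℝ × ℝ × ℝ → ℝ} (hW : ContDiff ℝ (⊤ : ℕ∞) W) (x y t : ℝ) :
    HasDerivAt (fun r => W (x, r, t)) (PD (0,1,0) W (x, y, t)) y := by
  have hι : HasDerivAt (fun r : ℝ => ((x, r, t) : ℝ × ℝ × ℝ)) ((0:ℝ),(1:ℝ),(0:ℝ)) y :=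
    HasDerivAt.prodMk (hasDerivAt_const y x) (HasDerivAt.prodMk (hasDerivAt_id y) (hasDerivAt_const y t))
  have hWd : HasFDerivAt W (fderiv ℝ W (x, y, t)) (x, y, t) :=
    (hW.differentiable (by simp) (x, y, t)).hasFDerivAt
  simpa [PD, Function.comp_def] using hWd.comp_hasDerivAt y hι

lemma hasDerivAt_sliceT {W : ℝ × ℝ × ℝ → ℝ} (hW : ContDiff ℝ (⊤ : ℕ∞) W) (x y t : ℝ) :
    HasDerivAt (fun τ => W (x, y, τ)) (PD (0,0,1) W (x, y, t)) t := by
  have hι : HasDerivAt (fun τ : ℝ => ((x, y, τ) : ℝ × ℝ × ℝ)) ((0:ℝ),(0:ℝ),(1:ℝ)) t :=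
    HasDerivAt.prodMk (hasDerivAt_const t x) (HasDerivAt.prodMk (hasDerivAt_const t y) (hasDerivAt_id t))
  have hWd : HasFDerivAt W (fderiv ℝ W (x, y, t)) (x, y, t) :=
    (hW.differentiable (by simp) (x, y, t)).hasFDerivAt
  simpa [PD, Function.comp_def] using hWd.comp_hasDerivAt t hι

/-- Schwarz symmetry: `PD v (PD w W) = PD w (PD v W)` for smooth `W`. -/
lemma PD_comm {W : ℝ × ℝ × ℝ → ℝ} (hW : ContDiff ℝ (⊤ : ℕ∞) W) (v w : ℝ × ℝ × ℝ) (p : ℝ × ℝ × ℝ) :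
    PD v (PD w W) p = PD w (PD v W) p := by
  have hd : ∀ q, HasFDerivAt W (fderiv ℝ W q) q :=
    fun q => (hW.differentiable (by simp) q).hasFDerivAt
  have hfd : ContDiff ℝ (⊤ : ℕ∞) (fun q => fderiv ℝ W q) := hW.fderiv_right (le_refl _)
  have hd2 : HasFDerivAt (fun q => fderiv ℝ W q) (fderiv ℝ (fderiv ℝ W) p) p :=
    ((hfd.differentiable (by simp)) p).hasFDerivAt
  have hsymm := second_derivative_symmetric hd hd2 v w
  -- compute PD v (PD w W) p = (fderiv ℝ (fderiv ℝ W) p v) w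
  have key : ∀ u z : ℝ × ℝ × ℝ, PD u (PD z W) p = (fderiv ℝ (fderiv ℝ W) p u) z := by
    intro u z
    have h1 : HasFDerivAt (fun q => (fderiv ℝ W q) z)
        ((fderiv ℝ (fderiv ℝ W) p).flip z) p := by
      have h2 := hd2.clm_apply (hasFDerivAt_const z p)
      simpa using h2
    show fderiv ℝ (fun q => (fderiv ℝ W q) z) p u = _
    rw [h1.fderiv]
    rfl
  rw [key v w, key w v]
  exact hsymm

/-! ### Identification of the `p*` derivatives with `PD` expressions -/

abbrev UC (ζ : ℝ → ℝ → ℝ → ℝ) : ℝ × ℝ × ℝ → ℝ := fun p => ζ p.1 p.2.1 p.2.2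

section Ident
variable {ζ : ℝ → ℝ → ℝ → ℝ} (hζ : ContDiff ℝ (⊤ : ℕ∞) (UC ζ))

-- the p-definitions from the problem file are repeated below in the final file
-- here we state them for deriv/iteratedDeriv forms directly

lemma derivX_eq (x y t : ℝ) {W : ℝ × ℝ × ℝ → ℝ} (hW : ContDiff ℝ (⊤ : ℕ∞) W) :
    deriv (fun s => W (s, y, t)) x = PD (1,0,0) W (x, y, t) :=
  (hasDerivAt_sliceX hW x y t).deriv

lemma derivY_eq (x y t : ℝ) {W : ℝ × ℝ × ℝ → ℝ} (hW : ContDiff ℝ (⊤ : ℕ∞) W) :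
    deriv (fun r => W (x, r, t)) y = PD (0,1,0) W (x, y, t) :=
  (hasDerivAt_sliceY hW x y t).deriv

lemma iteratedDeriv2Y_eq (x y t : ℝ) {W : ℝ × ℝ × ℝ → ℝ} (hW : ContDiff ℝ (⊤ : ℕ∞) W) :
    iteratedDeriv 2 (fun r => W (x, r, t)) y = PD (0,1,0) (PD (0,1,0) W) (x, y, t) := by
  have h1 : deriv (fun r => W (x, r, t)) = fun r => PD (0,1,0) W (x, r, t) :=
    funext fun r => (hasDerivAt_sliceY hW x r t).deriv
  rw [show (2:ℕ) = 1 + 1 from rfl, iteratedDeriv_succ', iteratedDeriv_one, h1]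
  exact (hasDerivAt_sliceY (PD_contDiff hW _) x y t).deriv

lemma iteratedDeriv3X_eq (x y t : ℝ) {W : ℝ × ℝ × ℝ → ℝ} (hW : ContDiff ℝ (⊤ : ℕ∞) W) :
    iteratedDeriv 3 (fun s => W (s, y, t)) x
      = PD (1,0,0) (PD (1,0,0) (PD (1,0,0) W)) (x, y, t) := by
  have h1 : deriv (fun s => W (s, y, t)) = fun s => PD (1,0,0) W (s, y, t) :=
    funext fun s => (hasDerivAt_sliceX hW s y t).deriv
  have h2 : deriv (fun s => PD (1,0,0) W (s, y, t))
      = fun s => PD (1,0,0) (PD (1,0,0) W) (s, y, t) :=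
    funext fun s => (hasDerivAt_sliceX (PD_contDiff hW _) s y t).deriv
  rw [show (3:ℕ) = 1 + 1 + 1 from rfl, iteratedDeriv_succ', iteratedDeriv_succ',
    iteratedDeriv_one, h1, h2]
  exact (hasDerivAt_sliceX (PD_contDiff (PD_contDiff hW _) _) x y t).deriv

end Ident

/-! ### Integration machinery on `Ω = (0,L]×(0,L]` -/

def ΩL (L : ℝ) : Set (ℝ × ℝ) := Ioo (0:ℝ) L ×ˢ Ioo (0:ℝ) L

lemma measurable_ΩL {L : ℝ} : MeasurableSet (ΩL L) :=
  measurableSet_Ioo.prod measurableSet_Ioo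

lemma vol_ΩL_lt_top {L : ℝ} : volume (ΩL L) < ⊤ := by
  rw [ΩL, Measure.volume_eq_prod, Measure.prod_prod]
  exact ENNReal.mul_lt_top measure_Ioo_lt_top measure_Ioo_lt_top

lemma bound2 {g : ℝ × ℝ → ℝ} (hg : Continuous g) (L : ℝ) :
    ∃ C, ∀ p ∈ ΩL L, |g p| ≤ C := by
  obtain ⟨C, hC⟩ := (IsCompact.prod (isCompact_Icc (a := (0:ℝ)) (b := L))
    (isCompact_Icc (a := (0:ℝ)) (b := L))).exists_bound_of_continuousOn hg.continuousOn
  refine ⟨C, fun p hp => ?_⟩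
  have : p ∈ Icc (0:ℝ) L ×ˢ Icc (0:ℝ) L :=
    ⟨Ioo_subset_Icc_self hp.1, Ioo_subset_Icc_self hp.2⟩
  simpa [Real.norm_eq_abs] using hC p this

lemma integrableOn_ΩL {L : ℝ} {f : ℝ × ℝ → ℝ}
    (hf : AEStronglyMeasurable f (volume : Measure (ℝ × ℝ)))
    {M : ℝ} (hbd : ∀ p ∈ ΩL L, |f p| ≤ M) : IntegrableOn f (ΩL L) := by
  apply Measure.integrableOn_of_bounded vol_ΩL_lt_top.ne hf
  filter_upwards [ae_restrict_mem measurable_ΩL] with p hp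
  simpa [Real.norm_eq_abs] using hbd p hp

lemma integrableOn_mul_cont {L : ℝ} {c : ℝ → ℝ → ℝ}
    (hc : Measurable (fun p : ℝ × ℝ => c p.1 p.2)) {M : ℝ} (hM : ∀ x y, |c x y| ≤ M)
    {g : ℝ × ℝ → ℝ} (hg : Continuous g) :
    IntegrableOn (fun p : ℝ × ℝ => c p.1 p.2 * g p) (ΩL L) := by
  obtain ⟨C, hC⟩ := bound2 hg L
  have hC0 : ∀ p ∈ ΩL L, |g p| ≤ max C 0 := fun p hp => (hC p hp).trans (le_max_left _ _)
  refine integrableOn_ΩL ((hc.mul hg.measurable).aestronglyMeasurable) (M := M * max C 0)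
    (fun p hp => ?_)
  rw [abs_mul]
  exact mul_le_mul (hM _ _) (hC0 p hp) (abs_nonneg _) ((abs_nonneg _).trans (hM 0 0))

lemma convII {L : ℝ} (hL : 0 ≤ L) {f : ℝ → ℝ → ℝ}
    (hf : IntegrableOn (fun p : ℝ × ℝ => f p.1 p.2) (ΩL L)) :
    (∫ x in (0:ℝ)..L, ∫ y in (0:ℝ)..L, f x y) = ∫ p in ΩL L, f p.1 p.2 := by
  rw [intervalIntegral.integral_of_le hL, integral_Ioc_eq_integral_Ioo]
  simp_rw [intervalIntegral.integral_of_le hL, integral_Ioc_eq_integral_Ioo]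
  rw [ΩL, Measure.volume_eq_prod] at hf ⊢
  exact (setIntegral_prod _ hf).symm

lemma swapII {L : ℝ} (hL : 0 ≤ L) {f : ℝ → ℝ → ℝ}
    (hf : IntegrableOn (fun p : ℝ × ℝ => f p.1 p.2) (ΩL L)) :
    (∫ x in (0:ℝ)..L, ∫ y in (0:ℝ)..L, f x y)
      = ∫ y in (0:ℝ)..L, ∫ x in (0:ℝ)..L, f x y := by
  rw [intervalIntegral.integral_of_le hL, integral_Ioc_eq_integral_Ioo]
  simp_rw [intervalIntegral.integral_of_le hL, integral_Ioc_eq_integral_Ioo]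
  rw [ΩL, Measure.volume_eq_prod] at hf
  have hf' : Integrable (Function.uncurry f)
      ((volume.restrict (Ioo (0:ℝ) L)).prod (volume.restrict (Ioo (0:ℝ) L))) := by
    rw [Measure.prod_restrict]; exact hf
  have := MeasureTheory.integral_integral_swap hf'
  simpa [Function.uncurry] using this

set_option maxHeartbeats 1000000 in
/-- Differentiation under the double interval integral. -/
lemma DUI {L : ℝ} (hL : 0 ≤ L) {c : ℝ → ℝ → ℝ}
    (hc : Measurable (fun p : ℝ × ℝ => c p.1 p.2))
    {M : ℝ} (hM : ∀ x y, |c x y| ≤ M)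
    {G G' : ℝ → ℝ → ℝ → ℝ}
    (hG : ∀ t, Continuous (fun p : ℝ × ℝ => G p.1 p.2 t))
    (hG' : Continuous (fun q : (ℝ × ℝ) × ℝ => G' q.1.1 q.1.2 q.2))
    (hd : ∀ x y t, HasDerivAt (G x y) (G' x y t) t) (t₀ : ℝ) :
    HasDerivAt (fun t => ∫ x in (0:ℝ)..L, ∫ y in (0:ℝ)..L, c x y * G x y t)
      (∫ x in (0:ℝ)..L, ∫ y in (0:ℝ)..L, c x y * G' x y t₀) t₀ := by
  have hM0 : 0 ≤ M := (abs_nonneg _).trans (hM 0 0)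
  -- bound for G' near t₀
  obtain ⟨C, hC⟩ := (IsCompact.prod (IsCompact.prod (isCompact_Icc (a := (0:ℝ)) (b := L))
      (isCompact_Icc (a := (0:ℝ)) (b := L)))
      (isCompact_Icc (a := t₀ - 1) (b := t₀ + 1))).exists_bound_of_continuousOn
      hG'.continuousOn
  have hC' : ∀ p ∈ ΩL L, ∀ t ∈ Metric.ball t₀ 1, |G' p.1 p.2 t| ≤ max C 0 := by
    intro p hp t ht
    have h1 : ((p, t) : (ℝ × ℝ) × ℝ) ∈ (Icc (0:ℝ) L ×ˢ Icc (0:ℝ) L) ×ˢ Icc (t₀-1) (t₀+1) := by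
      refine ⟨⟨Ioo_subset_Icc_self hp.1, Ioo_subset_Icc_self hp.2⟩, ?_⟩
      have := Metric.mem_ball.mp ht
      rw [Real.dist_eq] at this
      constructor <;> [linarith [abs_lt.mp this]; linarith [abs_lt.mp this]]
    exact le_trans (by simpa [Real.norm_eq_abs] using hC (p, t) h1) (le_max_left _ _)
  set μ := volume.restrict (ΩL L) with hμ
  have key := _root_.hasDerivAt_integral_of_dominated_loc_of_deriv_le (μ := μ)
    (F := fun t (p : ℝ × ℝ) => c p.1 p.2 * G p.1 p.2 t)
    (F' := fun t (p : ℝ × ℝ) => c p.1 p.2 * G' p.1 p.2 t)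
    (x₀ := t₀) (bound := fun _ => M * max C 0) (s := Metric.ball t₀ 1) (Metric.ball_mem_nhds t₀ one_pos)
    (Filter.Eventually.of_forall fun t =>
      ((hc.mul (hG t).measurable)).aestronglyMeasurable)
    (integrableOn_mul_cont hc hM (hG t₀))
    ((hc.mul (hG'.comp (continuous_id.prodMk continuous_const)).measurable).aestronglyMeasurable)
    (by
      filter_upwards [ae_restrict_mem measurable_ΩL] with p hp t ht
      rw [Real.norm_eq_abs, abs_mul]
      exact mul_le_mul (hM _ _) (hC' p hp t ht) (abs_nonneg _) hM0)
    (integrableOn_const vol_ΩL_lt_top.ne)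
    (Filter.Eventually.of_forall fun p => fun t _ => (hd p.1 p.2 t).const_mul _)
  have hint : ∀ t, IntegrableOn (fun p : ℝ × ℝ => c p.1 p.2 * G p.1 p.2 t) (ΩL L) :=
    fun t => integrableOn_mul_cont hc hM (hG t)
  have hfun : (fun t => ∫ x in (0:ℝ)..L, ∫ y in (0:ℝ)..L, c x y * G x y t)
      = fun t => ∫ p in ΩL L, c p.1 p.2 * G p.1 p.2 t :=
    funext fun t => convII hL (hint t)
  have hval : (∫ x in (0:ℝ)..L, ∫ y in (0:ℝ)..L, c x y * G' x y t₀)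
      = ∫ p in ΩL L, c p.1 p.2 * G' p.1 p.2 t₀ :=
    convII hL (integrableOn_mul_cont hc hM
      (hG'.comp (continuous_id.prodMk continuous_const)))
  rw [hfun, hval]
  exact key.2


/-! ### One-dimensional calculus helpers -/

lemma congr1D {L : ℝ} (hL : 0 ≤ L) {f g : ℝ → ℝ} (h : ∀ y ∈ Ioo (0:ℝ) L, f y = g y) :
    ∫ y in (0:ℝ)..L, f y = ∫ y in (0:ℝ)..L, g y := by
  rw [intervalIntegral.integral_of_le hL, integral_Ioc_eq_integral_Ioo,
    intervalIntegral.integral_of_le hL, integral_Ioc_eq_integral_Ioo]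
  exact setIntegral_congr_fun measurableSet_Ioo h

lemma ibp_uv {u v u' v' : ℝ → ℝ} (hu : ∀ x, HasDerivAt u (u' x) x)
    (hv : ∀ x, HasDerivAt v (v' x) x) (hu' : Continuous u') (hv' : Continuous v') (a b : ℝ) :
    ∫ x in a..b, u x * v' x
      = u b * v b - u a * v a - ∫ x in a..b, u' x * v x :=
  intervalIntegral.integral_mul_deriv_eq_deriv_mul (fun x _ => hu x) (fun x _ => hv x)
    (hu'.intervalIntegrable a b) (hv'.intervalIntegrable a b)

lemma ftc_sq {v v' : ℝ → ℝ} (hv : ∀ x, HasDerivAt v (v' x) x) (hv' : Continuous v') (a b : ℝ) :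
    ∫ x in a..b, v' x * v x = (1/2) * (v b)^2 - (1/2) * (v a)^2 := by
  have hcv : Continuous v := continuous_iff_continuousAt.2 fun x => (hv x).continuousAt
  have h : ∀ x ∈ uIcc a b, HasDerivAt (fun s => (1/2) * (v s)^2) (v' x * v x) x := by
    intro x _
    have h2 := ((hv x).fun_pow 2).const_mul (1/2 : ℝ)
    refine h2.congr_deriv ?_
    push_cast
    ring
  rw [← intervalIntegral.integral_eq_sub_of_hasDerivAt h ((hv'.mul hcv).intervalIntegrable a b)]

lemma ftc_cube {u u' : ℝ → ℝ} (hu : ∀ x, HasDerivAt u (u' x) x) (hu' : Continuous u') (a b : ℝ) :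
    ∫ x in a..b, (u x)^2 * u' x = (1/3) * (u b)^3 - (1/3) * (u a)^3 := by
  have hcu : Continuous u := continuous_iff_continuousAt.2 fun x => (hu x).continuousAt
  have h : ∀ x ∈ uIcc a b, HasDerivAt (fun s => (1/3) * (u s)^3) ((u x)^2 * u' x) x := by
    intro x _
    have h2 := ((hu x).fun_pow 3).const_mul (1/3 : ℝ)
    refine h2.congr_deriv ?_
    push_cast
    ring
  rw [← intervalIntegral.integral_eq_sub_of_hasDerivAt h
    (((hcu.pow 2).mul hu').intervalIntegrable a b)]

lemma deriv_zero_on_Ioo {f : ℝ → ℝ} {a b x : ℝ} (hx : x ∈ Ioo a b)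
    (hf : ∀ s ∈ Ioo a b, f s = 0) : deriv f x = 0 := by
  have h : f =ᶠ[nhds x] (fun _ => (0:ℝ)) :=
    Filter.eventuallyEq_of_mem (Ioo_mem_nhds hx.1 hx.2) hf
  rw [h.deriv_eq, deriv_const]

lemma integrableOn_cont {L : ℝ} {g : ℝ × ℝ → ℝ} (hg : Continuous g) :
    IntegrableOn g (ΩL L) := by
  obtain ⟨C, hC⟩ := bound2 hg L
  exact integrableOn_ΩL hg.aestronglyMeasurable hC

lemma contQ {F : ℝ × ℝ × ℝ → ℝ} (hF : Continuous F) :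
    Continuous (fun q : (ℝ × ℝ) × ℝ => F (q.1.1, q.1.2, q.2)) :=
  hF.comp ((continuous_fst.comp continuous_fst).prodMk
    ((continuous_snd.comp continuous_fst).prodMk continuous_snd))

lemma contP {F : ℝ × ℝ × ℝ → ℝ} (hF : Continuous F) (t : ℝ) :
    Continuous (fun p : ℝ × ℝ => F (p.1, p.2, t)) :=
  hF.comp (continuous_fst.prodMk (continuous_snd.prodMk continuous_const))

lemma contSliceX {W : ℝ × ℝ × ℝ → ℝ} (hW : Continuous W) (y t : ℝ) :
    Continuous (fun s : ℝ => W (s, y, t)) :=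
  hW.comp (continuous_id.prodMk continuous_const)

lemma contSliceY {W : ℝ × ℝ × ℝ → ℝ} (hW : Continuous W) (x t : ℝ) :
    Continuous (fun r : ℝ => W (x, r, t)) :=
  hW.comp (continuous_const.prodMk (continuous_id.prodMk continuous_const))

lemma contSliceT {W : ℝ × ℝ × ℝ → ℝ} (hW : Continuous W) (x y : ℝ) :
    Continuous (fun τ : ℝ => W (x, y, τ)) :=
  hW.comp (continuous_const.prodMk (continuous_const.prodMk continuous_id))

/-! ### Identification of `pX, pY, pT, pX3, pXYY` -/

section PEq

variable {ζ : ℝ → ℝ → ℝ → ℝ} (hζ : ContDiff ℝ (⊤ : ℕ∞) (UC ζ))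
include hζ

lemma pX_eq (x y t : ℝ) : pX ζ x y t = PD (1,0,0) (UC ζ) (x, y, t) :=
  derivX_eq (W := UC ζ) x y t hζ

lemma pY_eq (x y t : ℝ) : pY ζ x y t = PD (0,1,0) (UC ζ) (x, y, t) :=
  derivY_eq (W := UC ζ) x y t hζ

lemma pT_eq (x y t : ℝ) : pT ζ x y t = PD (0,0,1) (UC ζ) (x, y, t) :=
  (hasDerivAt_sliceT (W := UC ζ) hζ x y t).deriv

lemma pX3_eq (x y t : ℝ) :
    pX3 ζ x y t = PD (1,0,0) (PD (1,0,0) (PD (1,0,0) (UC ζ))) (x, y, t) := by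
  rw [pX3]
  exact iteratedDeriv3X_eq (W := UC ζ) x y t hζ

lemma pXYY_eq (x y t : ℝ) :
    pXYY ζ x y t = PD (1,0,0) (PD (0,1,0) (PD (0,1,0) (UC ζ))) (x, y, t) := by
  rw [pXYY]
  have h1 : (fun s => iteratedDeriv 2 (fun r => ζ s r t) y)
      = fun s => PD (0,1,0) (PD (0,1,0) (UC ζ)) (s, y, t) := by
    funext s
    exact iteratedDeriv2Y_eq (W := UC ζ) s y t hζ
  rw [h1]
  exact derivX_eq (W := PD (0,1,0) (PD (0,1,0) (UC ζ))) x y t (PD_contDiff (PD_contDiff hζ _) _)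

end PEq


/-! ### Spatial integral identities -/

section Slices

variable {ζ : ℝ → ℝ → ℝ → ℝ} (hζ : ContDiff ℝ (⊤ : ℕ∞) (UC ζ))
include hζ

lemma innerT1 {L y t : ℝ} (h0 : ζ 0 y t = 0) (hLv : ζ L y t = 0) (hL' : pX ζ L y t = 0) :
    ∫ x in (0:ℝ)..L, ζ x y t * pX3 ζ x y t = (1/2) * (pX ζ 0 y t)^2 := by
  have hW1 : ContDiff ℝ (⊤ : ℕ∞) (PD (1,0,0) (UC ζ)) := PD_contDiff hζ _
  have hW2 : ContDiff ℝ (⊤ : ℕ∞) (PD (1,0,0) (PD (1,0,0) (UC ζ))) := PD_contDiff hW1 _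
  have hW3 : ContDiff ℝ (⊤ : ℕ∞) (PD (1,0,0) (PD (1,0,0) (PD (1,0,0) (UC ζ)))) := PD_contDiff hW2 _
  have hrw : (∫ x in (0:ℝ)..L, ζ x y t * pX3 ζ x y t)
      = ∫ x in (0:ℝ)..L, UC ζ (x, y, t)
          * PD (1,0,0) (PD (1,0,0) (PD (1,0,0) (UC ζ))) (x, y, t) := by
    refine intervalIntegral.integral_congr fun x _ => ?_
    rw [pX3_eq hζ]
  rw [hrw]
  rw [ibp_uv (u := fun s => UC ζ (s,y,t))
      (v := fun s => PD (1,0,0) (PD (1,0,0) (UC ζ)) (s,y,t))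
      (fun x => hasDerivAt_sliceX (W := UC ζ) hζ x y t)
      (fun x => hasDerivAt_sliceX (W := PD (1,0,0) (PD (1,0,0) (UC ζ))) hW2 x y t)
      (contSliceX hW1.continuous y t)
      (contSliceX hW3.continuous y t) 0 L]
  have e0 : UC ζ (L, y, t) = 0 := hLv
  have e1 : UC ζ (0, y, t) = 0 := h0
  rw [e0, e1]
  have hcomm : (∫ x in (0:ℝ)..L, PD (1,0,0) (UC ζ) (x,y,t)
        * PD (1,0,0) (PD (1,0,0) (UC ζ)) (x,y,t))
      = ∫ x in (0:ℝ)..L, PD (1,0,0) (PD (1,0,0) (UC ζ)) (x,y,t)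
        * PD (1,0,0) (UC ζ) (x,y,t) :=
    intervalIntegral.integral_congr fun x _ => mul_comm _ _
  rw [hcomm]
  rw [ftc_sq (v := fun s => PD (1,0,0) (UC ζ) (s,y,t))
      (fun x => hasDerivAt_sliceX (W := PD (1,0,0) (UC ζ)) hW1 x y t)
      (contSliceX hW2.continuous y t) 0 L]
  have eL : PD (1,0,0) (UC ζ) (L,y,t) = 0 := by rw [← pX_eq hζ]; exact hL'
  rw [eL, ← pX_eq hζ]
  ring

lemma innerT2 {L y t : ℝ} (h0 : ζ 0 y t = 0) (hLv : ζ L y t = 0) :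
    ∫ x in (0:ℝ)..L, ζ x y t * (ζ x y t * pX ζ x y t) = 0 := by
  have hW1 : ContDiff ℝ (⊤ : ℕ∞) (PD (1,0,0) (UC ζ)) := PD_contDiff hζ _
  have hrw : (∫ x in (0:ℝ)..L, ζ x y t * (ζ x y t * pX ζ x y t))
      = ∫ x in (0:ℝ)..L, (UC ζ (x, y, t))^2 * PD (1,0,0) (UC ζ) (x, y, t) := by
    refine intervalIntegral.integral_congr fun x _ => ?_
    rw [pX_eq hζ]
    show UC ζ (x,y,t) * (UC ζ (x,y,t) * _) = _
    ring
  rw [hrw]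
  rw [ftc_cube (u := fun s => UC ζ (s,y,t))
      (fun x => hasDerivAt_sliceX (W := UC ζ) hζ x y t)
      (contSliceX hW1.continuous y t) 0 L]
  have e0 : UC ζ (L, y, t) = 0 := hLv
  have e1 : UC ζ (0, y, t) = 0 := h0
  rw [e0, e1]
  ring

omit hζ in
lemma Vzero {L t : ℝ} (hL : 0 ≤ L) (hbc : ∀ y ∈ Ioo (0:ℝ) L, ζ 0 y t = 0) :
    ∫ y in (0:ℝ)..L, (pY ζ 0 y t)^2 = 0 := by
  rw [congr1D hL (g := fun _ => (0:ℝ)) (fun y hy => by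
    have : pY ζ 0 y t = 0 := deriv_zero_on_Ioo hy (fun r hr => hbc r hr)
    rw [this]; ring)]
  simp

lemma T1val {L t : ℝ} (hL : 0 ≤ L)
    (hbc1 : ∀ y ∈ Ioo (0:ℝ) L, ζ 0 y t = 0 ∧ ζ L y t = 0 ∧ pX ζ L y t = 0) :
    ∫ x in (0:ℝ)..L, ∫ y in (0:ℝ)..L, ζ x y t * pX3 ζ x y t
      = (1/2) * ∫ y in (0:ℝ)..L, (pX ζ 0 y t)^2 := by
  have hW1 : ContDiff ℝ (⊤ : ℕ∞) (PD (1,0,0) (UC ζ)) := PD_contDiff hζ _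
  have hW2 : ContDiff ℝ (⊤ : ℕ∞) (PD (1,0,0) (PD (1,0,0) (UC ζ))) := PD_contDiff hW1 _
  have hW3 : ContDiff ℝ (⊤ : ℕ∞) (PD (1,0,0) (PD (1,0,0) (PD (1,0,0) (UC ζ)))) := PD_contDiff hW2 _
  have hcont : Continuous (fun p : ℝ × ℝ => ζ p.1 p.2 t * pX3 ζ p.1 p.2 t) := by
    have hfun : (fun p : ℝ × ℝ => ζ p.1 p.2 t * pX3 ζ p.1 p.2 t)
        = fun p : ℝ × ℝ => UC ζ (p.1, p.2, t)
            * PD (1,0,0) (PD (1,0,0) (PD (1,0,0) (UC ζ))) (p.1, p.2, t) := by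
      funext p
      rw [pX3_eq hζ]
    rw [hfun]
    exact (contP hζ.continuous t).mul (contP hW3.continuous t)
  rw [swapII hL (f := fun x y => ζ x y t * pX3 ζ x y t) (integrableOn_cont hcont)]
  rw [congr1D hL (fun y hy =>
    innerT1 hζ (hbc1 y hy).1 (hbc1 y hy).2.1 (hbc1 y hy).2.2)]
  rw [intervalIntegral.integral_const_mul]

lemma T2val {L t : ℝ} (hL : 0 ≤ L)
    (hbc1 : ∀ y ∈ Ioo (0:ℝ) L, ζ 0 y t = 0 ∧ ζ L y t = 0 ∧ pX ζ L y t = 0) :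
    ∫ x in (0:ℝ)..L, ∫ y in (0:ℝ)..L, ζ x y t * (ζ x y t * pX ζ x y t) = 0 := by
  have hW1 : ContDiff ℝ (⊤ : ℕ∞) (PD (1,0,0) (UC ζ)) := PD_contDiff hζ _
  have hcont : Continuous (fun p : ℝ × ℝ => ζ p.1 p.2 t * (ζ p.1 p.2 t * pX ζ p.1 p.2 t)) := by
    have hfun : (fun p : ℝ × ℝ => ζ p.1 p.2 t * (ζ p.1 p.2 t * pX ζ p.1 p.2 t))
        = fun p : ℝ × ℝ => UC ζ (p.1, p.2, t)
            * (UC ζ (p.1, p.2, t) * PD (1,0,0) (UC ζ) (p.1, p.2, t)) := by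
      funext p
      rw [pX_eq hζ]
    rw [hfun]
    exact (contP hζ.continuous t).mul
      ((contP hζ.continuous t).mul (contP hW1.continuous t))
  rw [swapII hL (f := fun x y => ζ x y t * (ζ x y t * pX ζ x y t)) (integrableOn_cont hcont)]
  rw [congr1D hL (fun y hy => innerT2 hζ (hbc1 y hy).1 (hbc1 y hy).2.1)]
  simp

lemma T3zero {L t : ℝ} (hL : 0 ≤ L)
    (hbc1 : ∀ y ∈ Ioo (0:ℝ) L, ζ 0 y t = 0 ∧ ζ L y t = 0 ∧ pY ζ L y t = 0)
    (hbc2 : ∀ x ∈ Ioo (0:ℝ) L, ζ x 0 t = 0 ∧ ζ x L t = 0) :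
    ∫ x in (0:ℝ)..L, ∫ y in (0:ℝ)..L, ζ x y t * pXYY ζ x y t = 0 := by
  have hW2 : ContDiff ℝ (⊤ : ℕ∞) (PD (0,1,0) (UC ζ)) := PD_contDiff hζ _
  have hW22 : ContDiff ℝ (⊤ : ℕ∞) (PD (0,1,0) (PD (0,1,0) (UC ζ))) := PD_contDiff hW2 _
  have hW122 : ContDiff ℝ (⊤ : ℕ∞) (PD (1,0,0) (PD (0,1,0) (PD (0,1,0) (UC ζ)))) := PD_contDiff hW22 _
  have hW1 : ContDiff ℝ (⊤ : ℕ∞) (PD (1,0,0) (UC ζ)) := PD_contDiff hζ _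
  have hW21 : ContDiff ℝ (⊤ : ℕ∞) (PD (0,1,0) (PD (1,0,0) (UC ζ))) := PD_contDiff hW1 _
  have hW12 : ContDiff ℝ (⊤ : ℕ∞) (PD (1,0,0) (PD (0,1,0) (UC ζ))) := PD_contDiff hW2 _
  -- rewrite integrand in PD form
  have h0 : (∫ x in (0:ℝ)..L, ∫ y in (0:ℝ)..L, ζ x y t * pXYY ζ x y t)
      = ∫ x in (0:ℝ)..L, ∫ y in (0:ℝ)..L,
          UC ζ (x,y,t) * PD (1,0,0) (PD (0,1,0) (PD (0,1,0) (UC ζ))) (x,y,t) := by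
    refine intervalIntegral.integral_congr fun x _ => ?_
    refine intervalIntegral.integral_congr fun y _ => ?_
    rw [pXYY_eq hζ]
  rw [h0]
  rw [swapII hL (f := fun x y => UC ζ (x,y,t)
        * PD (1,0,0) (PD (0,1,0) (PD (0,1,0) (UC ζ))) (x,y,t))
      (integrableOn_cont ((contP hζ.continuous t).mul (contP hW122.continuous t)))]
  -- IBP in x (for fixed y ∈ Ioo)
  have h2 : ∀ y ∈ Ioo (0:ℝ) L,
      (∫ x in (0:ℝ)..L, UC ζ (x,y,t)
          * PD (1,0,0) (PD (0,1,0) (PD (0,1,0) (UC ζ))) (x,y,t))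
        = -∫ x in (0:ℝ)..L, PD (1,0,0) (UC ζ) (x,y,t)
            * PD (0,1,0) (PD (0,1,0) (UC ζ)) (x,y,t) := by
    intro y hy
    rw [ibp_uv (u := fun s => UC ζ (s,y,t))
        (v := fun s => PD (0,1,0) (PD (0,1,0) (UC ζ)) (s,y,t))
        (fun x => hasDerivAt_sliceX (W := UC ζ) hζ x y t)
        (fun x => hasDerivAt_sliceX (W := PD (0,1,0) (PD (0,1,0) (UC ζ))) hW22 x y t)
        (contSliceX hW1.continuous y t)
        (contSliceX hW122.continuous y t) 0 L]
    have e0 : UC ζ (L, y, t) = 0 := (hbc1 y hy).2.1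
    have e1 : UC ζ (0, y, t) = 0 := (hbc1 y hy).1
    rw [e0, e1]
    ring
  rw [congr1D hL h2, intervalIntegral.integral_neg]
  rw [← swapII hL (f := fun x y => PD (1,0,0) (UC ζ) (x,y,t)
        * PD (0,1,0) (PD (0,1,0) (UC ζ)) (x,y,t))
      (integrableOn_cont ((contP hW1.continuous t).mul (contP hW22.continuous t)))]
  -- IBP in y (for fixed x ∈ Ioo)
  have h5 : ∀ x ∈ Ioo (0:ℝ) L,
      (∫ y in (0:ℝ)..L, PD (1,0,0) (UC ζ) (x,y,t)
          * PD (0,1,0) (PD (0,1,0) (UC ζ)) (x,y,t))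
        = -∫ y in (0:ℝ)..L, PD (1,0,0) (PD (0,1,0) (UC ζ)) (x,y,t)
            * PD (0,1,0) (UC ζ) (x,y,t) := by
    intro x hx
    rw [ibp_uv (u := fun r => PD (1,0,0) (UC ζ) (x,r,t))
        (v := fun r => PD (0,1,0) (UC ζ) (x,r,t))
        (fun y => hasDerivAt_sliceY (W := PD (1,0,0) (UC ζ)) hW1 x y t)
        (fun y => hasDerivAt_sliceY (W := PD (0,1,0) (UC ζ)) hW2 x y t)
        (contSliceY hW21.continuous x t)
        (contSliceY hW22.continuous x t) 0 L]
    have hu0 : PD (1,0,0) (UC ζ) (x,0,t) = 0 := by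
      rw [← pX_eq hζ]
      exact deriv_zero_on_Ioo hx (fun s hs => (hbc2 s hs).1)
    have huL : PD (1,0,0) (UC ζ) (x,L,t) = 0 := by
      rw [← pX_eq hζ]
      exact deriv_zero_on_Ioo hx (fun s hs => (hbc2 s hs).2)
    rw [hu0, huL]
    have hsch : (∫ y in (0:ℝ)..L, PD (0,1,0) (PD (1,0,0) (UC ζ)) (x,y,t)
          * PD (0,1,0) (UC ζ) (x,y,t))
        = ∫ y in (0:ℝ)..L, PD (1,0,0) (PD (0,1,0) (UC ζ)) (x,y,t)
            * PD (0,1,0) (UC ζ) (x,y,t) := by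
      refine intervalIntegral.integral_congr fun y _ => ?_
      rw [PD_comm hζ]
    rw [hsch]
    ring
  rw [congr1D hL h5, intervalIntegral.integral_neg, neg_neg]
  rw [swapII hL (f := fun x y => PD (1,0,0) (PD (0,1,0) (UC ζ)) (x,y,t)
        * PD (0,1,0) (UC ζ) (x,y,t))
      (integrableOn_cont ((contP hW12.continuous t).mul (contP hW2.continuous t)))]
  have h8 : ∀ y ∈ Ioo (0:ℝ) L,
      (∫ x in (0:ℝ)..L, PD (1,0,0) (PD (0,1,0) (UC ζ)) (x,y,t)
          * PD (0,1,0) (UC ζ) (x,y,t)) = 0 := by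
    intro y hy
    rw [ftc_sq (v := fun s => PD (0,1,0) (UC ζ) (s,y,t))
        (fun x => hasDerivAt_sliceX (W := PD (0,1,0) (UC ζ)) hW2 x y t)
        (contSliceX hW12.continuous y t) 0 L]
    have hL0 : PD (0,1,0) (UC ζ) (L,y,t) = 0 := by
      rw [← pY_eq hζ]
      exact (hbc1 y hy).2.2
    have h00 : PD (0,1,0) (UC ζ) (0,y,t) = 0 := by
      rw [← pY_eq hζ]
      exact deriv_zero_on_Ioo hy (fun r hr => (hbc1 r hr).1)
    rw [hL0, h00]
    ring
  rw [congr1D hL h8]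
  simp

end Slices


/-! ### Delay-term lemmas -/

lemma delay_inner {ζ : ℝ → ℝ → ℝ → ℝ} {b : ℝ → ℝ → ℝ} {h : ℝ} (hh : 0 < h) (x y t : ℝ) :
    (∫ ρ in (0:ℝ)..1, b x y * (ζ x y (t - ρ*h))^2)
      = (b x y * h⁻¹) * ∫ s in (t-h)..t, (ζ x y s)^2 := by
  rw [intervalIntegral.integral_const_mul]
  have h1 : (∫ ρ in (0:ℝ)..1, (ζ x y (t - ρ*h))^2)
      = h⁻¹ * ∫ s in (t-h)..t, (ζ x y s)^2 := by
    have h2 := intervalIntegral.integral_comp_mul_right (a := (0:ℝ)) (b := 1)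
      (f := fun u => (ζ x y (t - u))^2) hh.ne'
    rw [zero_mul, one_mul] at h2
    rw [h2, smul_eq_mul]
    congr 1
    have h3 := intervalIntegral.integral_comp_sub_left (a := (0:ℝ)) (b := h)
      (fun s => (ζ x y s)^2) t
    rw [sub_zero] at h3
    exact h3
  rw [h1]
  ring

lemma delay_hasDeriv {ζ : ℝ → ℝ → ℝ → ℝ} (hζ : ContDiff ℝ (⊤ : ℕ∞) (UC ζ)) {h : ℝ} (x y t : ℝ) :
    HasDerivAt (fun τ => ∫ s in (τ-h)..τ, (ζ x y s)^2)
      ((ζ x y t)^2 - (ζ x y (t-h))^2) t := by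
  have hg : Continuous (fun s => (ζ x y s)^2) := (contSliceT hζ.continuous x y).pow 2
  have hF : ∀ r : ℝ, HasDerivAt (fun u => ∫ s in (0:ℝ)..u, (ζ x y s)^2) ((ζ x y r)^2) r :=
    fun r => intervalIntegral.integral_hasDerivAt_right (hg.intervalIntegrable 0 r)
      (hg.stronglyMeasurableAtFilter volume (nhds r)) hg.continuousAt
  have hfun : (fun τ => ∫ s in (τ-h)..τ, (ζ x y s)^2)
      = fun τ => (∫ s in (0:ℝ)..τ, (ζ x y s)^2) - ∫ s in (0:ℝ)..(τ-h), (ζ x y s)^2 := by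
    funext τ
    exact (intervalIntegral.integral_interval_sub_left (hg.intervalIntegrable 0 τ)
      (hg.intervalIntegrable 0 (τ-h))).symm
  rw [hfun]
  have h2 : HasDerivAt (fun τ : ℝ => ∫ s in (0:ℝ)..(τ-h), (ζ x y s)^2)
      ((ζ x y (t-h))^2) t := by
    have h3 := (hF (t-h)).comp t ((hasDerivAt_id t).sub_const h)
    simpa [Function.comp_def] using h3
  exact (hF t).sub h2


/-- Energy dissipation for the perturbed delayed ZK system with
source `f = -ζ∂ₓζ`: for `ξ > 1`, `(d/dt)E_ξ(t) ≤ -D(t) ≤ 0`; in particular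
`E_ξ` is non-increasing. -/
theorem perturbed_energy_dissipation
    (L α γ h ξ : ℝ) (a b : ℝ → ℝ → ℝ)
    (hL : 0 < L) (hα : 0 < α) (hγ : 0 < γ) (hh : 0 < h)
    (ha : Coeff a) (hb : Coeff b) (hξ : 1 < ξ) :
    ∀ ζ : ℝ → ℝ → ℝ → ℝ,
      IsPertSol L α γ h ξ a b (fun x y t => -(ζ x y t * pX ζ x y t)) ζ →
      (∀ t > (0:ℝ),
        deriv (pertE L h ξ b ζ) t ≤ -(D9 L α γ h ξ a b ζ t)
          ∧ 0 ≤ D9 L α γ h ξ a b ζ t)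
      ∧ AntitoneOn (pertE L h ξ b ζ) (Ici (0:ℝ)) := by
  intro ζ hsol
  obtain ⟨hζ0, hbc, hpde⟩ := hsol
  have hζ : ContDiff ℝ (⊤ : ℕ∞) (UC ζ) := hζ0
  obtain ⟨haM, haNN, Ma, haB⟩ := ha
  obtain ⟨hbM, hbNN, Mb, hbB⟩ := hb
  have habs : ∀ x y, |a x y| ≤ Ma := fun x y => by
    rw [abs_of_nonneg (haNN x y)]; exact haB x y
  have hbabs : ∀ x y, |b x y| ≤ Mb := fun x y => by
    rw [abs_of_nonneg (hbNN x y)]; exact hbB x y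
  have hL0 : (0:ℝ) ≤ L := hL.le
  have hPD3 : ContDiff ℝ (⊤ : ℕ∞) (PD (0,0,1) (UC ζ)) := PD_contDiff hζ _
  have hPD1 : ContDiff ℝ (⊤ : ℕ∞) (PD (1,0,0) (UC ζ)) := PD_contDiff hζ _
  have hPD11 : ContDiff ℝ (⊤ : ℕ∞) (PD (1,0,0) (PD (1,0,0) (UC ζ))) := PD_contDiff hPD1 _
  have hPD111 : ContDiff ℝ (⊤ : ℕ∞) (PD (1,0,0) (PD (1,0,0) (PD (1,0,0) (UC ζ)))) :=
    PD_contDiff hPD11 _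
  have hPD2 : ContDiff ℝ (⊤ : ℕ∞) (PD (0,1,0) (UC ζ)) := PD_contDiff hζ _
  have hPD22 : ContDiff ℝ (⊤ : ℕ∞) (PD (0,1,0) (PD (0,1,0) (UC ζ))) := PD_contDiff hPD2 _
  have hPD122 : ContDiff ℝ (⊤ : ℕ∞) (PD (1,0,0) (PD (0,1,0) (PD (0,1,0) (UC ζ)))) :=
    PD_contDiff hPD22 _
  -- time derivative of the squared solution
  have hd1 : ∀ x y τ, HasDerivAt (fun τ' => (ζ x y τ')^2) (2 * ζ x y τ * pT ζ x y τ) τ := by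
    intro x y τ
    have h1 := (hasDerivAt_sliceT (W := UC ζ) hζ x y τ).fun_pow 2
    rw [← pT_eq hζ x y τ] at h1
    simpa using h1
  have hG1cont : ∀ t : ℝ, Continuous (fun p : ℝ × ℝ => (ζ p.1 p.2 t)^2) :=
    fun t => (contP hζ.continuous t).pow 2
  have hG1'cont : Continuous (fun q : (ℝ × ℝ) × ℝ =>
      2 * ζ q.1.1 q.1.2 q.2 * pT ζ q.1.1 q.1.2 q.2) := by
    have hfun : (fun q : (ℝ × ℝ) × ℝ => 2 * ζ q.1.1 q.1.2 q.2 * pT ζ q.1.1 q.1.2 q.2)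
        = fun q : (ℝ × ℝ) × ℝ => 2 * UC ζ (q.1.1, q.1.2, q.2)
            * PD (0,0,1) (UC ζ) (q.1.1, q.1.2, q.2) := by
      funext q
      rw [pT_eq hζ]
    rw [hfun]
    exact (continuous_const.mul (contQ hζ.continuous)).mul (contQ hPD3.continuous)
  have hDUI1 : ∀ t₀ : ℝ, HasDerivAt
      (fun t => ∫ x in (0:ℝ)..L, ∫ y in (0:ℝ)..L, (1:ℝ) * (ζ x y t)^2)
      (∫ x in (0:ℝ)..L, ∫ y in (0:ℝ)..L, (1:ℝ) * (2 * ζ x y t₀ * pT ζ x y t₀)) t₀ :=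
    fun t₀ => DUI hL0 (c := fun _ _ => (1:ℝ)) measurable_const (M := 1)
      (fun _ _ => by norm_num) hG1cont hG1'cont hd1 t₀
  have hG2cont : ∀ t : ℝ, Continuous (fun p : ℝ × ℝ => ∫ s in (t-h)..t, (ζ p.1 p.2 s)^2) := by
    intro t
    exact intervalIntegral.continuous_parametric_intervalIntegral_of_continuous'
      (f := fun (p : ℝ × ℝ) s => (ζ p.1 p.2 s)^2) ((continuous_pow 2).comp (contQ hζ.continuous)) (t-h) t
  have hG2'cont : Continuous (fun q : (ℝ × ℝ) × ℝ =>
      (ζ q.1.1 q.1.2 q.2)^2 - (ζ q.1.1 q.1.2 (q.2 - h))^2) := by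
    have c1 : Continuous (fun q : (ℝ × ℝ) × ℝ => ζ q.1.1 q.1.2 q.2) := contQ hζ.continuous
    have c2 : Continuous (fun q : (ℝ × ℝ) × ℝ => ζ q.1.1 q.1.2 (q.2 - h)) := by
      have h3 : Continuous (fun q : (ℝ × ℝ) × ℝ => ((q.1.1, q.1.2, q.2 - h) : ℝ × ℝ × ℝ)) :=
        (continuous_fst.comp continuous_fst).prodMk
          ((continuous_snd.comp continuous_fst).prodMk (continuous_snd.sub continuous_const))
      exact hζ.continuous.comp h3
    exact (c1.pow 2).sub (c2.pow 2)
  have hc2meas : Measurable (fun p : ℝ × ℝ => b p.1 p.2 * h⁻¹) := hbM.mul measurable_const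
  have hc2bd : ∀ x y, |b x y * h⁻¹| ≤ Mb * h⁻¹ := fun x y => by
    rw [abs_of_nonneg (mul_nonneg (hbNN x y) (inv_nonneg.mpr hh.le))]
    exact mul_le_mul_of_nonneg_right (hbB x y) (inv_nonneg.mpr hh.le)
  have hDUI2 : ∀ t₀ : ℝ, HasDerivAt
      (fun t => ∫ x in (0:ℝ)..L, ∫ y in (0:ℝ)..L,
        (b x y * h⁻¹) * ∫ s in (t-h)..t, (ζ x y s)^2)
      (∫ x in (0:ℝ)..L, ∫ y in (0:ℝ)..L,
        (b x y * h⁻¹) * ((ζ x y t₀)^2 - (ζ x y (t₀-h))^2)) t₀ :=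
    fun t₀ => DUI hL0 (c := fun x y => b x y * h⁻¹) hc2meas hc2bd
      (G := fun x y t => ∫ s in (t-h)..t, (ζ x y s)^2)
      (G' := fun x y t => (ζ x y t)^2 - (ζ x y (t-h))^2)
      hG2cont hG2'cont (fun x y τ => delay_hasDeriv hζ x y τ) t₀
  have hEfun : pertE L h ξ b ζ = fun t =>
      (1/2) * (∫ x in (0:ℝ)..L, ∫ y in (0:ℝ)..L, (1:ℝ) * (ζ x y t)^2)
      + (ξ*h/2) * (∫ x in (0:ℝ)..L, ∫ y in (0:ℝ)..L,
          (b x y * h⁻¹) * ∫ s in (t-h)..t, (ζ x y s)^2) := by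
    funext t
    simp only [pertE]
    congr 1
    · congr 1
      refine intervalIntegral.integral_congr fun x _ => ?_
      refine intervalIntegral.integral_congr fun y _ => ?_
      rw [one_mul]
    · congr 1
      refine intervalIntegral.integral_congr fun x _ => ?_
      refine intervalIntegral.integral_congr fun y _ => ?_
      exact delay_inner hh x y t
  have hE : ∀ t₀ : ℝ, HasDerivAt (pertE L h ξ b ζ)
      ((1/2) * (∫ x in (0:ℝ)..L, ∫ y in (0:ℝ)..L, (1:ℝ) * (2 * ζ x y t₀ * pT ζ x y t₀))
       + (ξ*h/2) * (∫ x in (0:ℝ)..L, ∫ y in (0:ℝ)..L,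
          (b x y * h⁻¹) * ((ζ x y t₀)^2 - (ζ x y (t₀-h))^2))) t₀ := by
    intro t₀
    rw [hEfun]
    exact ((hDUI1 t₀).const_mul (1/2 : ℝ)).add ((hDUI2 t₀).const_mul (ξ*h/2))
  -- main estimate at fixed positive time
  have hVal : ∀ t : ℝ, 0 < t →
      deriv (pertE L h ξ b ζ) t ≤ -(D9 L α γ h ξ a b ζ t)
        ∧ 0 ≤ D9 L α γ h ξ a b ζ t := by
    intro t ht
    obtain ⟨hbcy, hbcx⟩ := hbc t ht
    have hbcy3 : ∀ y ∈ Ioo (0:ℝ) L, ζ 0 y t = 0 ∧ ζ L y t = 0 ∧ pX ζ L y t = 0 :=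
      fun y hy => ⟨(hbcy y hy).1, (hbcy y hy).2.1, (hbcy y hy).2.2.1⟩
    have hbcyY : ∀ y ∈ Ioo (0:ℝ) L, ζ 0 y t = 0 ∧ ζ L y t = 0 ∧ pY ζ L y t = 0 :=
      fun y hy => ⟨(hbcy y hy).1, (hbcy y hy).2.1, (hbcy y hy).2.2.2⟩
    -- continuity of the integrands
    have hc_pT : Continuous (fun p : ℝ × ℝ => ζ p.1 p.2 t * pT ζ p.1 p.2 t) := by
      have hfun : (fun p : ℝ × ℝ => ζ p.1 p.2 t * pT ζ p.1 p.2 t)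
          = fun p : ℝ × ℝ => UC ζ (p.1,p.2,t) * PD (0,0,1) (UC ζ) (p.1,p.2,t) := by
        funext p; rw [pT_eq hζ]
      rw [hfun]
      exact (contP hζ.continuous t).mul (contP hPD3.continuous t)
    have hc_pX3 : Continuous (fun p : ℝ × ℝ => ζ p.1 p.2 t * pX3 ζ p.1 p.2 t) := by
      have hfun : (fun p : ℝ × ℝ => ζ p.1 p.2 t * pX3 ζ p.1 p.2 t)
          = fun p : ℝ × ℝ => UC ζ (p.1,p.2,t)
              * PD (1,0,0) (PD (1,0,0) (PD (1,0,0) (UC ζ))) (p.1,p.2,t) := by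
        funext p; rw [pX3_eq hζ]
      rw [hfun]
      exact (contP hζ.continuous t).mul (contP hPD111.continuous t)
    have hc_pXYY : Continuous (fun p : ℝ × ℝ => ζ p.1 p.2 t * pXYY ζ p.1 p.2 t) := by
      have hfun : (fun p : ℝ × ℝ => ζ p.1 p.2 t * pXYY ζ p.1 p.2 t)
          = fun p : ℝ × ℝ => UC ζ (p.1,p.2,t)
              * PD (1,0,0) (PD (0,1,0) (PD (0,1,0) (UC ζ))) (p.1,p.2,t) := by
        funext p; rw [pXYY_eq hζ]
      rw [hfun]
      exact (contP hζ.continuous t).mul (contP hPD122.continuous t)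
    have hc_pX : Continuous
        (fun p : ℝ × ℝ => ζ p.1 p.2 t * (ζ p.1 p.2 t * pX ζ p.1 p.2 t)) := by
      have hfun : (fun p : ℝ × ℝ => ζ p.1 p.2 t * (ζ p.1 p.2 t * pX ζ p.1 p.2 t))
          = fun p : ℝ × ℝ => UC ζ (p.1,p.2,t)
              * (UC ζ (p.1,p.2,t) * PD (1,0,0) (UC ζ) (p.1,p.2,t)) := by
        funext p; rw [pX_eq hζ]
      rw [hfun]
      exact (contP hζ.continuous t).mul
        ((contP hζ.continuous t).mul (contP hPD1.continuous t))
    have hcζt : Continuous (fun p : ℝ × ℝ => (ζ p.1 p.2 t)^2) :=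
      (contP hζ.continuous t).pow 2
    have hcζh : Continuous (fun p : ℝ × ℝ => (ζ p.1 p.2 (t-h))^2) :=
      (contP hζ.continuous (t-h)).pow 2
    have hcmix : Continuous (fun p : ℝ × ℝ => ζ p.1 p.2 t * ζ p.1 p.2 (t-h)) :=
      (contP hζ.continuous t).mul (contP hζ.continuous (t-h))
    -- integrable pieces
    have int1 : IntegrableOn (fun p : ℝ × ℝ => ζ p.1 p.2 t * pX3 ζ p.1 p.2 t) (ΩL L) :=
      integrableOn_cont hc_pX3
    have int2 : IntegrableOn (fun p : ℝ × ℝ => ζ p.1 p.2 t * pXYY ζ p.1 p.2 t) (ΩL L) :=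
      integrableOn_cont hc_pXYY
    have int3 : IntegrableOn
        (fun p : ℝ × ℝ => ζ p.1 p.2 t * (ζ p.1 p.2 t * pX ζ p.1 p.2 t)) (ΩL L) :=
      integrableOn_cont hc_pX
    have int4 : IntegrableOn (fun p : ℝ × ℝ => a p.1 p.2 * (ζ p.1 p.2 t)^2) (ΩL L) :=
      integrableOn_mul_cont haM habs hcζt
    have int5 : IntegrableOn (fun p : ℝ × ℝ => b p.1 p.2 * (ζ p.1 p.2 t)^2) (ΩL L) :=
      integrableOn_mul_cont hbM hbabs hcζt
    have int7 : IntegrableOn (fun p : ℝ × ℝ => b p.1 p.2 * (ζ p.1 p.2 (t-h))^2) (ΩL L) :=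
      integrableOn_mul_cont hbM hbabs hcζh
    have int6 : IntegrableOn
        (fun p : ℝ × ℝ => b p.1 p.2 * (ζ p.1 p.2 t * ζ p.1 p.2 (t-h))) (ΩL L) :=
      integrableOn_mul_cont hbM hbabs hcmix
    -- decomposition of the main integral using the PDE
    have hSdecomp : (∫ p in ΩL L, ζ p.1 p.2 t * pT ζ p.1 p.2 t)
        = (-α) * (∫ p in ΩL L, ζ p.1 p.2 t * pX3 ζ p.1 p.2 t)
          + ((-γ) * (∫ p in ΩL L, ζ p.1 p.2 t * pXYY ζ p.1 p.2 t)
          + ((-1) * (∫ p in ΩL L, ζ p.1 p.2 t * (ζ p.1 p.2 t * pX ζ p.1 p.2 t))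
          + ((-1) * (∫ p in ΩL L, a p.1 p.2 * (ζ p.1 p.2 t)^2)
          + ((-ξ) * (∫ p in ΩL L, b p.1 p.2 * (ζ p.1 p.2 t)^2)
          + (-1) * (∫ p in ΩL L, b p.1 p.2 * (ζ p.1 p.2 t * ζ p.1 p.2 (t-h))))))) := by
      have hcong : (∫ p in ΩL L, ζ p.1 p.2 t * pT ζ p.1 p.2 t)
          = ∫ p in ΩL L, ((-α) * (ζ p.1 p.2 t * pX3 ζ p.1 p.2 t)
            + ((-γ) * (ζ p.1 p.2 t * pXYY ζ p.1 p.2 t)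
            + ((-1) * (ζ p.1 p.2 t * (ζ p.1 p.2 t * pX ζ p.1 p.2 t))
            + ((-1) * (a p.1 p.2 * (ζ p.1 p.2 t)^2)
            + ((-ξ) * (b p.1 p.2 * (ζ p.1 p.2 t)^2)
            + (-1) * (b p.1 p.2 * (ζ p.1 p.2 t * ζ p.1 p.2 (t-h)))))))) := by
        refine setIntegral_congr_fun measurable_ΩL fun p hp => ?_
        have heq := hpde p.1 hp.1 p.2 hp.2 t ht
        simp only [] at heq
        linear_combination (ζ p.1 p.2 t) * heq
      have j6 : IntegrableOn
          (fun p : ℝ × ℝ => (-1:ℝ) * (b p.1 p.2 * (ζ p.1 p.2 t * ζ p.1 p.2 (t-h)))) (ΩL L) :=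
        int6.const_mul (-1)
      have j56 : IntegrableOn (fun p : ℝ × ℝ =>
          (-ξ) * (b p.1 p.2 * (ζ p.1 p.2 t)^2)
          + (-1:ℝ) * (b p.1 p.2 * (ζ p.1 p.2 t * ζ p.1 p.2 (t-h)))) (ΩL L) :=
        (int5.const_mul (-ξ)).add j6
      have j456 : IntegrableOn (fun p : ℝ × ℝ =>
          (-1:ℝ) * (a p.1 p.2 * (ζ p.1 p.2 t)^2)
          + ((-ξ) * (b p.1 p.2 * (ζ p.1 p.2 t)^2)
          + (-1:ℝ) * (b p.1 p.2 * (ζ p.1 p.2 t * ζ p.1 p.2 (t-h))))) (ΩL L) :=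
        (int4.const_mul (-1)).add j56
      have j3456 : IntegrableOn (fun p : ℝ × ℝ =>
          (-1:ℝ) * (ζ p.1 p.2 t * (ζ p.1 p.2 t * pX ζ p.1 p.2 t))
          + ((-1:ℝ) * (a p.1 p.2 * (ζ p.1 p.2 t)^2)
          + ((-ξ) * (b p.1 p.2 * (ζ p.1 p.2 t)^2)
          + (-1:ℝ) * (b p.1 p.2 * (ζ p.1 p.2 t * ζ p.1 p.2 (t-h)))))) (ΩL L) :=
        (int3.const_mul (-1)).add j456
      have j23456 : IntegrableOn (fun p : ℝ × ℝ =>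
          (-γ) * (ζ p.1 p.2 t * pXYY ζ p.1 p.2 t)
          + ((-1:ℝ) * (ζ p.1 p.2 t * (ζ p.1 p.2 t * pX ζ p.1 p.2 t))
          + ((-1:ℝ) * (a p.1 p.2 * (ζ p.1 p.2 t)^2)
          + ((-ξ) * (b p.1 p.2 * (ζ p.1 p.2 t)^2)
          + (-1:ℝ) * (b p.1 p.2 * (ζ p.1 p.2 t * ζ p.1 p.2 (t-h))))))) (ΩL L) :=
        (int2.const_mul (-γ)).add j3456
      rw [hcong,
        integral_add (int1.const_mul (-α)) j23456,
        integral_add (int2.const_mul (-γ)) j3456,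
        integral_add (int3.const_mul (-1)) j456,
        integral_add (int4.const_mul (-1)) j56,
        integral_add (int5.const_mul (-ξ)) j6,
        MeasureTheory.integral_const_mul, MeasureTheory.integral_const_mul, MeasureTheory.integral_const_mul, MeasureTheory.integral_const_mul,
        MeasureTheory.integral_const_mul, MeasureTheory.integral_const_mul]
    -- values of the spatial integrals
    have hI1val : (∫ p in ΩL L, ζ p.1 p.2 t * pX3 ζ p.1 p.2 t)
        = (1/2) * ∫ y in (0:ℝ)..L, (pX ζ 0 y t)^2 := by
      rw [← convII hL0 (f := fun x y => ζ x y t * pX3 ζ x y t) int1]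
      exact T1val hζ hL0 hbcy3
    have hI2val : (∫ p in ΩL L, ζ p.1 p.2 t * pXYY ζ p.1 p.2 t) = 0 := by
      rw [← convII hL0 (f := fun x y => ζ x y t * pXYY ζ x y t) int2]
      exact T3zero hζ hL0 hbcyY hbcx
    have hI3val : (∫ p in ΩL L, ζ p.1 p.2 t * (ζ p.1 p.2 t * pX ζ p.1 p.2 t)) = 0 := by
      rw [← convII hL0 (f := fun x y => ζ x y t * (ζ x y t * pX ζ x y t)) int3]
      exact T2val hζ hL0 hbcy3
    -- first piece of the derivative
    have hA1 : (∫ x in (0:ℝ)..L, ∫ y in (0:ℝ)..L, (1:ℝ) * (2 * ζ x y t * pT ζ x y t))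
        = 2 * ∫ p in ΩL L, ζ p.1 p.2 t * pT ζ p.1 p.2 t := by
      have e1 : (∫ x in (0:ℝ)..L, ∫ y in (0:ℝ)..L, (1:ℝ) * (2 * ζ x y t * pT ζ x y t))
          = ∫ x in (0:ℝ)..L, ∫ y in (0:ℝ)..L, 2 * (ζ x y t * pT ζ x y t) := by
        refine intervalIntegral.integral_congr fun x _ => ?_
        refine intervalIntegral.integral_congr fun y _ => ?_
        ring
      rw [e1]
      have e2 : ∀ x : ℝ, (∫ y in (0:ℝ)..L, 2 * (ζ x y t * pT ζ x y t))
          = 2 * ∫ y in (0:ℝ)..L, ζ x y t * pT ζ x y t :=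
        fun x => intervalIntegral.integral_const_mul _ _
      rw [intervalIntegral.integral_congr
          (g := fun x => 2 * ∫ y in (0:ℝ)..L, ζ x y t * pT ζ x y t) (fun x _ => e2 x),
        intervalIntegral.integral_const_mul,
        convII hL0 (f := fun x y => ζ x y t * pT ζ x y t) (integrableOn_cont hc_pT)]
    -- second piece of the derivative
    have hA2 : (∫ x in (0:ℝ)..L, ∫ y in (0:ℝ)..L,
          (b x y * h⁻¹) * ((ζ x y t)^2 - (ζ x y (t-h))^2))
        = h⁻¹ * ((∫ p in ΩL L, b p.1 p.2 * (ζ p.1 p.2 t)^2)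
            - ∫ p in ΩL L, b p.1 p.2 * (ζ p.1 p.2 (t-h))^2) := by
      have hgint : IntegrableOn (fun p : ℝ × ℝ =>
          (b p.1 p.2 * h⁻¹) * ((ζ p.1 p.2 t)^2 - (ζ p.1 p.2 (t-h))^2)) (ΩL L) :=
        integrableOn_mul_cont hc2meas hc2bd (hcζt.sub hcζh)
      rw [convII hL0 (f := fun x y => (b x y * h⁻¹) * ((ζ x y t)^2 - (ζ x y (t-h))^2)) hgint]
      have e1 : ∀ p : ℝ × ℝ, (b p.1 p.2 * h⁻¹) * ((ζ p.1 p.2 t)^2 - (ζ p.1 p.2 (t-h))^2)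
          = h⁻¹ * (b p.1 p.2 * (ζ p.1 p.2 t)^2 - b p.1 p.2 * (ζ p.1 p.2 (t-h))^2) :=
        fun p => by ring
      rw [integral_congr_ae (Filter.Eventually.of_forall e1), MeasureTheory.integral_const_mul,
        integral_sub int5 int7]
    -- Young inequality for the cross term
    have hY : -(∫ p in ΩL L, b p.1 p.2 * (ζ p.1 p.2 t * ζ p.1 p.2 (t-h)))
        ≤ (1/2) * (∫ p in ΩL L, b p.1 p.2 * (ζ p.1 p.2 t)^2)
          + (1/2) * (∫ p in ΩL L, b p.1 p.2 * (ζ p.1 p.2 (t-h))^2) := by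
      have hnn : (0:ℝ) ≤ ∫ p in ΩL L,
          (b p.1 p.2 * (ζ p.1 p.2 t * ζ p.1 p.2 (t-h))
            + ((1/2) * (b p.1 p.2 * (ζ p.1 p.2 t)^2)
               + (1/2) * (b p.1 p.2 * (ζ p.1 p.2 (t-h))^2))) := by
        refine setIntegral_nonneg measurable_ΩL fun p _ => ?_
        have h1 := mul_nonneg (hbNN p.1 p.2) (sq_nonneg (ζ p.1 p.2 t + ζ p.1 p.2 (t-h)))
        nlinarith [h1]
      have jY : IntegrableOn (fun p : ℝ × ℝ =>
          (1/2:ℝ) * (b p.1 p.2 * (ζ p.1 p.2 t)^2)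
          + (1/2:ℝ) * (b p.1 p.2 * (ζ p.1 p.2 (t-h))^2)) (ΩL L) :=
        (int5.const_mul (1/2)).add (int7.const_mul (1/2))
      rw [integral_add int6 jY,
        integral_add (int5.const_mul (1/2)) (int7.const_mul (1/2)),
        MeasureTheory.integral_const_mul, MeasureTheory.integral_const_mul] at hnn
      linarith
    -- the γ boundary term vanishes
    have hVz : (∫ y in (0:ℝ)..L, (pY ζ 0 y t)^2) = 0 :=
      Vzero hL0 (fun y hy => (hbcy y hy).1)
    -- value of D9
    have hD9val : D9 L α γ h ξ a b ζ t
        = (α/2) * (∫ y in (0:ℝ)..L, (pX ζ 0 y t)^2)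
          + ((∫ p in ΩL L, a p.1 p.2 * (ζ p.1 p.2 t)^2)
          + (((ξ-1)/2) * (∫ p in ΩL L, b p.1 p.2 * (ζ p.1 p.2 t)^2)
          + ((ξ-1)/2) * (∫ p in ΩL L, b p.1 p.2 * (ζ p.1 p.2 (t-h))^2))) := by
      simp only [D9]
      rw [hVz,
        convII hL0 (f := fun x y => a x y * (ζ x y t)^2) int4,
        convII hL0 (f := fun x y => b x y * (ζ x y t)^2) int5,
        convII hL0 (f := fun x y => b x y * (ζ x y (t-h))^2) int7]
      ring
    -- nonnegativity facts
    have hQnn : 0 ≤ ∫ y in (0:ℝ)..L, (pX ζ 0 y t)^2 :=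
      intervalIntegral.integral_nonneg hL0 (fun y _ => sq_nonneg _)
    have hI4nn : 0 ≤ ∫ p in ΩL L, a p.1 p.2 * (ζ p.1 p.2 t)^2 :=
      setIntegral_nonneg measurable_ΩL fun p _ => mul_nonneg (haNN _ _) (sq_nonneg _)
    have hI5nn : 0 ≤ ∫ p in ΩL L, b p.1 p.2 * (ζ p.1 p.2 t)^2 :=
      setIntegral_nonneg measurable_ΩL fun p _ => mul_nonneg (hbNN _ _) (sq_nonneg _)
    have hI7nn : 0 ≤ ∫ p in ΩL L, b p.1 p.2 * (ζ p.1 p.2 (t-h))^2 :=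
      setIntegral_nonneg measurable_ΩL fun p _ => mul_nonneg (hbNN _ _) (sq_nonneg _)
    have hD9nn : 0 ≤ D9 L α γ h ξ a b ζ t := by
      rw [hD9val]
      have hξ2 : (0:ℝ) ≤ (ξ-1)/2 := by linarith
      have hα2 : (0:ℝ) ≤ α/2 := by linarith
      nlinarith [mul_nonneg hξ2 hI5nn, mul_nonneg hξ2 hI7nn, mul_nonneg hα2 hQnn]
    refine ⟨?_, hD9nn⟩
    have hderiv := (hE t).deriv
    rw [hderiv, hA1, hA2, hSdecomp, hI1val, hI2val, hI3val, hD9val]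
    have hexp : (ξ*h/2) * (h⁻¹ * ((∫ p in ΩL L, b p.1 p.2 * (ζ p.1 p.2 t)^2)
            - ∫ p in ΩL L, b p.1 p.2 * (ζ p.1 p.2 (t-h))^2))
        = (ξ/2) * ((∫ p in ΩL L, b p.1 p.2 * (ζ p.1 p.2 t)^2)
            - ∫ p in ΩL L, b p.1 p.2 * (ζ p.1 p.2 (t-h))^2) := by
      field_simp
    rw [hexp]
    nlinarith [hY]
  refine ⟨fun t ht => hVal t ht, ?_⟩
  have hconts : ContinuousOn (pertE L h ξ b ζ) (Ici 0) :=
    fun s _ => (hE s).continuousAt.continuousWithinAt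
  have hdiff : DifferentiableOn ℝ (pertE L h ξ b ζ) (interior (Ici (0:ℝ))) :=
    fun s _ => (hE s).differentiableAt.differentiableWithinAt
  refine antitoneOn_of_deriv_nonpos (convex_Ici 0) hconts hdiff ?_
  intro s hs
  rw [interior_Ici] at hs
  have h1 := hVal s hs
  linarith [h1.1, h1.2]
end
end

section
/- Let T > 0 and let f : [0,L]²×[0,T] → ℝ be continuous. Every classical solution ζ of the linear μ-system with source f satisfies, for all t ∈ [0,T], ‖(ζ(·,·,t), ζ(·,·,t−h·))‖_H ≤ e^{(ξ‖a‖_∞/(2h)) T} ( ‖(ζ₀,z₀)‖_H + ∫₀^T ‖f(·,·,s)‖_{L²(Ω)} ds ), where ζ(·,·,t−h·) denotes the function (x,y,ρ) ↦ ζ(x,y,t−ρh). -/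
open MeasureTheory intervalIntegral Set

noncomputable section

-- ===== auxiliary lemmas =====



abbrev E3 := ℝ × ℝ × ℝ

/-- Directional partial derivative. -/
def Dv (v : E3) (G : E3 → ℝ) : E3 → ℝ := fun p => fderiv ℝ G p v

lemma Dv_contDiff {G : E3 → ℝ} (hG : ContDiff ℝ (⊤ : ℕ∞) G) (v : E3) : ContDiff ℝ (⊤ : ℕ∞) (Dv v G) := by
  have h1 : ContDiff ℝ (⊤ : ℕ∞) (fderiv ℝ G) := hG.fderiv_right (by simp)
  exact (ContinuousLinearMap.apply ℝ ℝ v).contDiff.comp h1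

lemma hasDerivAt_slice1 {G : E3 → ℝ} (hG : ContDiff ℝ (⊤ : ℕ∞) G) (x y t : ℝ) :
    HasDerivAt (fun s => G (s, y, t)) (Dv (1,0,0) G (x,y,t)) x := by
  have hγ : HasDerivAt (fun s : ℝ => ((s, y, t) : E3)) ((1:ℝ),(0:ℝ),(0:ℝ)) x :=
    (hasDerivAt_id x).prodMk ((hasDerivAt_const x y).prodMk (hasDerivAt_const x t))
  exact HasFDerivAt.comp_hasDerivAt x ((hG.differentiable (by simp) (x,y,t)).hasFDerivAt) hγ

lemma hasDerivAt_slice2 {G : E3 → ℝ} (hG : ContDiff ℝ (⊤ : ℕ∞) G) (x y t : ℝ) :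
    HasDerivAt (fun r => G (x, r, t)) (Dv (0,1,0) G (x,y,t)) y := by
  have hγ : HasDerivAt (fun r : ℝ => ((x, r, t) : E3)) ((0:ℝ),(1:ℝ),(0:ℝ)) y :=
    (hasDerivAt_const y x).prodMk ((hasDerivAt_id y).prodMk (hasDerivAt_const y t))
  exact HasFDerivAt.comp_hasDerivAt y ((hG.differentiable (by simp) (x,y,t)).hasFDerivAt) hγ

lemma hasDerivAt_slice3 {G : E3 → ℝ} (hG : ContDiff ℝ (⊤ : ℕ∞) G) (x y t : ℝ) :
    HasDerivAt (fun τ => G (x, y, τ)) (Dv (0,0,1) G (x,y,t)) t := by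
  have hγ : HasDerivAt (fun τ : ℝ => ((x, y, τ) : E3)) ((0:ℝ),(0:ℝ),(1:ℝ)) t :=
    (hasDerivAt_const t x).prodMk ((hasDerivAt_const t y).prodMk (hasDerivAt_id t))
  exact HasFDerivAt.comp_hasDerivAt t ((hG.differentiable (by simp) (x,y,t)).hasFDerivAt) hγ

lemma Dv_comm {G : E3 → ℝ} (hG : ContDiff ℝ (⊤ : ℕ∞) G) (v w : E3) (p : E3) :
    Dv v (Dv w G) p = Dv w (Dv v G) p := by
  have hG' : ContDiff ℝ (⊤ : ℕ∞) (fderiv ℝ G) := hG.fderiv_right (by simp)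
  have hd : DifferentiableAt ℝ (fderiv ℝ G) p := (hG'.differentiable (by simp)) p
  have hsymm : ∀ v w : E3, fderiv ℝ (fderiv ℝ G) p v w = fderiv ℝ (fderiv ℝ G) p w v :=
    second_derivative_symmetric (fun y => ((hG.differentiable (by simp)) y).hasFDerivAt)
      hd.hasFDerivAt
  have comp : ∀ u : E3, fderiv ℝ (fun q => fderiv ℝ G q u) p
      = (ContinuousLinearMap.apply ℝ ℝ u).comp (fderiv ℝ (fderiv ℝ G) p) := by
    intro u
    exact ((ContinuousLinearMap.apply ℝ ℝ u).hasFDerivAt.comp p hd.hasFDerivAt).fderiv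
  show fderiv ℝ (fun q => fderiv ℝ G q w) p v = fderiv ℝ (fun q => fderiv ℝ G q v) p w
  rw [comp w, comp v]
  exact hsymm v w



lemma hasDerivAt_param {G G' : ℝ → ℝ → ℝ} (hG : Continuous fun p : ℝ × ℝ => G p.1 p.2)
    (hG' : Continuous fun p : ℝ × ℝ => G' p.1 p.2)
    (hd : ∀ x s, HasDerivAt (fun τ => G x τ) (G' x s) s) (a b t₀ : ℝ) :
    HasDerivAt (fun s => ∫ x in a..b, G x s) (∫ x in a..b, G' x t₀) t₀ := by
  obtain ⟨C, hC⟩ : ∃ C, ∀ q ∈ (uIcc a b ×ˢ Icc (t₀-1) (t₀+1)),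
      ‖(fun p : ℝ × ℝ => G' p.1 p.2) q‖ ≤ C :=
    (isCompact_uIcc.prod isCompact_Icc).exists_bound_of_continuousOn hG'.continuousOn
  have key := intervalIntegral.hasDerivAt_integral_of_dominated_loc_of_deriv_le
    (𝕜 := ℝ) (μ := volume) (F := fun s x => G x s) (F' := fun s x => G' x s) (x₀ := t₀)
    (a := a) (b := b) (bound := fun _ => C) (s := Metric.ball t₀ 1) (Metric.ball_mem_nhds t₀ one_pos)
    (Filter.Eventually.of_forall fun s =>
      ((hG.comp (continuous_id.prodMk continuous_const)).aestronglyMeasurable))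
    ((hG.comp (continuous_id.prodMk continuous_const)).intervalIntegrable a b)
    ((hG'.comp (continuous_id.prodMk continuous_const)).aestronglyMeasurable)
    (Filter.Eventually.of_forall fun x hx s hs => by
      apply hC (x, s)
      constructor
      · exact uIoc_subset_uIcc hx
      · have := mem_ball_iff_norm.mp hs
        rw [Real.norm_eq_abs, abs_lt] at this
        constructor <;> simp at this ⊢ <;> linarith [this.1, this.2])
    (intervalIntegrable_const)
    (Filter.Eventually.of_forall fun x _ s _ => hd x s)
  exact key.2

lemma cont_param2 {H : ℝ → ℝ → ℝ → ℝ}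
    (hH : Continuous fun q : ℝ × ℝ × ℝ => H q.1 q.2.1 q.2.2) (c d : ℝ) :
    Continuous fun p : ℝ × ℝ => ∫ y in c..d, H p.1 y p.2 := by
  apply intervalIntegral.continuous_parametric_intervalIntegral_of_continuous' (μ := volume)
    (f := fun (p : ℝ × ℝ) y => H p.1 y p.2) ?_ c d
  exact hH.comp ((continuous_fst.comp continuous_fst).prodMk (continuous_snd.prodMk (continuous_snd.comp continuous_fst)))

lemma swap_cont {F : ℝ → ℝ → ℝ} (hF : Continuous fun p : ℝ × ℝ => F p.1 p.2) {L : ℝ}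
    (hL : 0 ≤ L) :
    (∫ x in (0:ℝ)..L, ∫ y in (0:ℝ)..L, F x y) = ∫ y in (0:ℝ)..L, ∫ x in (0:ℝ)..L, F x y := by
  have hint : Integrable (Function.uncurry F)
      ((volume.restrict (Ioc (0:ℝ) L)).prod (volume.restrict (Ioc (0:ℝ) L))) := by
    rw [Measure.prod_restrict, ← Measure.volume_eq_prod]
    exact (((show Continuous (Function.uncurry F) from hF).continuousOn.integrableOn_compact (isCompact_Icc.prod isCompact_Icc))).mono_set
      (prod_mono Ioc_subset_Icc_self Ioc_subset_Icc_self)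
  rw [intervalIntegral.integral_of_le hL, intervalIntegral.integral_of_le hL]
  simp_rw [intervalIntegral.integral_of_le hL]
  exact MeasureTheory.integral_integral_swap hint

lemma intervalIntegrable_of_bdd {g : ℝ → ℝ} {C a b : ℝ} (hm : Measurable g)
    (hb : ∀ y, |g y| ≤ C) : IntervalIntegrable g volume a b := by
  rw [intervalIntegrable_iff]
  apply MeasureTheory.Integrable.mono' (g := fun _ => C) ?_ hm.aestronglyMeasurable.restrict
    (ae_of_all _ (by simpa [Real.norm_eq_abs] using hb))
  exact MeasureTheory.integrableOn_const measure_Ioc_lt_top.ne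

lemma le_sqrt_mul_sqrt {c p q : ℝ} (hp : 0 ≤ p) (hq : 0 ≤ q)
    (h : ∀ l : ℝ, 0 < l → c ≤ (l * p + q / l) / 2) : c ≤ Real.sqrt p * Real.sqrt q := by
  set sp := Real.sqrt p with hsp
  set sq := Real.sqrt q with hsq
  have hsp0 : 0 ≤ sp := Real.sqrt_nonneg p
  have hsq0 : 0 ≤ sq := Real.sqrt_nonneg q
  have hp2 : sp ^ 2 = p := Real.sq_sqrt hp
  have hq2 : sq ^ 2 = q := Real.sq_sqrt hq
  apply le_of_forall_pos_le_add
  intro ε hε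
  set δ : ℝ := min 1 (ε / (sp + sq + 1)) with hδdef
  have hδpos : 0 < δ := lt_min one_pos (by positivity)
  set l : ℝ := (sq + δ) / (sp + δ) with hl
  have hlpos : 0 < l := div_pos (by linarith) (by linarith)
  have h1 : l * p ≤ sp * (sq + δ) := by
    rw [hl, div_mul_eq_mul_div, div_le_iff₀ (by linarith : (0:ℝ) < sp + δ), ← hp2]
    nlinarith [mul_nonneg (mul_nonneg hsp0 (show (0:ℝ) ≤ sq + δ by linarith)) hδpos.le]
  have h2 : q / l ≤ sq * (sp + δ) := by
    rw [hl, div_div_eq_mul_div, div_le_iff₀ (by linarith : (0:ℝ) < sq + δ), ← hq2]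
    nlinarith [mul_nonneg (mul_nonneg hsq0 (show (0:ℝ) ≤ sp + δ by linarith)) hδpos.le]
  have h3 : c ≤ (l * p + q / l) / 2 := h l hlpos
  have h4 : δ * (sp + sq) ≤ 2 * ε := by
    have : δ ≤ ε / (sp + sq + 1) := min_le_right _ _
    have h5 : δ * (sp + sq) ≤ (ε / (sp + sq + 1)) * (sp + sq) := by
      apply mul_le_mul_of_nonneg_right this (by linarith)
    have h6 : (ε / (sp + sq + 1)) * (sp + sq) ≤ ε := by
      rw [div_mul_eq_mul_div, div_le_iff₀ (by linarith : (0:ℝ) < sp + sq + 1)]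
      nlinarith
    linarith
  nlinarith



lemma ae_le_of_isGLB {L Ma : ℝ} {a : ℝ → ℝ → ℝ}
    (hMa : IsGLB {c : ℝ | ∀ᵐ p ∂(volume.restrict (Ioo (0:ℝ) L ×ˢ Ioo (0:ℝ) L)),
      a p.1 p.2 ≤ c} Ma) :
    ∀ᵐ p ∂(volume.restrict (Ioo (0:ℝ) L ×ˢ Ioo (0:ℝ) L)), a p.1 p.2 ≤ Ma := by
  have h : ∀ n : ℕ, ∃ c, (∀ᵐ p ∂(volume.restrict (Ioo (0:ℝ) L ×ˢ Ioo (0:ℝ) L)),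
      a p.1 p.2 ≤ c) ∧ c < Ma + 1/(n+1) := by
    intro n
    obtain ⟨c, hc, _, hlt⟩ := hMa.exists_between
      (lt_add_of_pos_right Ma (by positivity : (0:ℝ) < 1/(n+1)))
    exact ⟨c, hc, hlt⟩
  choose cs h1 h2 using h
  filter_upwards [MeasureTheory.ae_all_iff.mpr h1] with p hp
  by_contra hcon
  push_neg at hcon
  obtain ⟨n, hn⟩ := exists_nat_one_div_lt (sub_pos.mpr hcon)
  have := (hp n).trans_lt (h2 n)
  have hnn : (1:ℝ)/(n+1) < a p.1 p.2 - Ma := hn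
  linarith

lemma glb_nonneg {L Ma : ℝ} {a : ℝ → ℝ → ℝ} (hL : 0 < L) (hnn : ∀ x y, 0 ≤ a x y)
    (hMa : IsGLB {c : ℝ | ∀ᵐ p ∂(volume.restrict (Ioo (0:ℝ) L ×ˢ Ioo (0:ℝ) L)),
      a p.1 p.2 ≤ c} Ma) : 0 ≤ Ma := by
  apply hMa.2
  intro c hc
  by_contra hneg
  push_neg at hneg
  simp only [mem_setOf_eq] at hc
  rw [ae_iff] at hc
  have hset : {p : ℝ × ℝ | ¬ a p.1 p.2 ≤ c} = univ := by
    apply eq_univ_of_forall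
    intro p
    simp only [mem_setOf_eq, not_le]
    exact lt_of_lt_of_le hneg (hnn p.1 p.2)
  rw [hset, Measure.restrict_apply_univ] at hc
  rw [Measure.volume_eq_prod, Measure.prod_prod, Real.volume_Ioo] at hc
  simp only [sub_zero, ← ENNReal.ofReal_mul hL.le] at hc
  rw [ENNReal.ofReal_eq_zero] at hc
  nlinarith

lemma ae_slice_le {L Ma : ℝ} {a : ℝ → ℝ → ℝ}
    (hMa : IsGLB {c : ℝ | ∀ᵐ p ∂(volume.restrict (Ioo (0:ℝ) L ×ˢ Ioo (0:ℝ) L)),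
      a p.1 p.2 ≤ c} Ma) :
    ∀ᵐ x ∂(volume.restrict (Icc (0:ℝ) L)),
      ∀ᵐ y ∂(volume.restrict (Icc (0:ℝ) L)), a x y ≤ Ma := by
  have h0 := ae_le_of_isGLB hMa
  rw [Measure.volume_eq_prod, ← Measure.prod_restrict] at h0
  have h1 := Measure.ae_ae_of_ae_prod h0
  have e1 : volume.restrict (Ioo (0:ℝ) L) = volume.restrict (Icc (0:ℝ) L) :=
    Measure.restrict_congr_set Ioo_ae_eq_Icc
  rw [e1] at h1
  exact h1



lemma gronwall_aux {E φ : ℝ → ℝ} {K T : ℝ} (hK : 0 ≤ K) (hT : 0 < T)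
    (hEnn : ∀ τ, 0 ≤ E τ) (hφc : Continuous φ) (hφ0 : ∀ s, 0 ≤ φ s)
    {Ed : ℝ → ℝ} (hEderiv : ∀ τ, HasDerivAt E (Ed τ) τ)
    (hbound : ∀ τ, 0 < τ → τ ≤ T → Ed τ ≤ 2*K*E τ + 2*φ τ*Real.sqrt (E τ)) :
    ∀ t ∈ Icc (0:ℝ) T,
      Real.sqrt (E t) ≤ Real.exp (K*T) * (Real.sqrt (E 0) + ∫ s in (0:ℝ)..T, φ s) := by
  intro t ht
  set IT : ℝ := ∫ s in (0:ℝ)..T, φ s with hIT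
  have hITnn : 0 ≤ IT := intervalIntegral.integral_nonneg hT.le (fun s _ => hφ0 s)
  have hexp1 : (1:ℝ) ≤ Real.exp (K*T) := by
    rw [Real.one_le_exp_iff]; positivity
  -- main estimate with regularization ε
  have main : ∀ ε : ℝ, 0 < ε →
      Real.sqrt (E t) ≤ Real.exp (K*T) * (Real.sqrt (E 0 + ε) + IT) := by
    intro ε hε
    set u : ℝ → ℝ := fun τ => Real.sqrt (E τ + ε) with hu
    have hEpos : ∀ τ, 0 < E τ + ε := fun τ => by have := hEnn τ; linarith
    have hupos : ∀ τ, 0 < u τ := fun τ => Real.sqrt_pos.mpr (hEpos τ)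
    have hud : ∀ τ, HasDerivAt u (Ed τ / (2 * u τ)) τ := by
      intro τ
      have h1 : HasDerivAt (fun σ => E σ + ε) (Ed τ) τ := (hEderiv τ).add_const ε
      have h2 := (Real.hasDerivAt_sqrt (ne_of_gt (hEpos τ))).comp τ h1
      refine h2.congr_deriv ?_
      simp only [hu]; ring
    have hΦd : ∀ τ, HasDerivAt (fun σ => ∫ s in (0:ℝ)..σ, φ s) (φ τ) τ := fun τ =>
      intervalIntegral.integral_hasDerivAt_right (hφc.intervalIntegrable _ _)
        (hφc.stronglyMeasurableAtFilter _ _) hφc.continuousAt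
    set w : ℝ → ℝ := fun τ => Real.exp (-(K*τ)) * u τ - ∫ s in (0:ℝ)..τ, φ s with hw
    have hexpd : ∀ τ, HasDerivAt (fun σ => Real.exp (-(K*σ))) (-K * Real.exp (-(K*τ))) τ := by
      intro τ
      have h1 : HasDerivAt (fun σ : ℝ => -(K*σ)) (-K) τ := by
        have := ((hasDerivAt_id' τ).const_mul K).neg
        simp only [mul_one] at this
        exact this
      have := h1.exp
      convert this using 1; ring
    have hwd : ∀ τ, HasDerivAt w
        (-K * Real.exp (-(K*τ)) * u τ + Real.exp (-(K*τ)) * (Ed τ / (2 * u τ)) - φ τ) τ := by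
      intro τ
      exact (((hexpd τ).mul (hud τ)).sub (hΦd τ))
    have hwc : Continuous w := by
      have : Differentiable ℝ w := fun τ => (hwd τ).differentiableAt
      exact this.continuous
    have hanti : AntitoneOn w (Icc 0 T) := by
      apply antitoneOn_of_deriv_nonpos (convex_Icc 0 T) hwc.continuousOn
      · intro x hx
        exact (hwd x).differentiableAt.differentiableWithinAt
      · intro x hx
        rw [interior_Icc] at hx
        rw [(hwd x).deriv]
        have hub : Ed x / (2 * u x) ≤ K * u x + φ x := by
          rw [div_le_iff₀ (mul_pos two_pos (hupos x))]
          have h1 : Ed x ≤ 2*K*E x + 2*φ x*Real.sqrt (E x) := hbound x hx.1 hx.2.le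
          have h2 : E x ≤ (u x)^2 := by
            rw [hu]; rw [Real.sq_sqrt (hEpos x).le]; linarith
          have h3 : Real.sqrt (E x) ≤ u x := Real.sqrt_le_sqrt (by linarith)
          have h4 : 0 ≤ Real.sqrt (E x) := Real.sqrt_nonneg _
          nlinarith [hupos x, hφ0 x]
        have hexp_le : Real.exp (-(K*x)) ≤ 1 := by
          rw [Real.exp_le_one_iff]
          have : 0 ≤ K * x := mul_nonneg hK hx.1.le
          linarith
        have hexp_nn : 0 ≤ Real.exp (-(K*x)) := (Real.exp_pos _).le
        have := mul_le_mul_of_nonneg_left hub hexp_nn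
        nlinarith [hφ0 x]
    have hw0 : w t ≤ w 0 := hanti ⟨le_refl 0, hT.le⟩ ht ht.1
    have hw0v : w 0 = u 0 := by
      simp [hw]
    have hIle : (∫ s in (0:ℝ)..t, φ s) ≤ IT := by
      have h1 := intervalIntegral.integral_interval_sub_left
        (hφc.intervalIntegrable (μ := volume) (0:ℝ) T) (hφc.intervalIntegrable (μ := volume) (0:ℝ) t)
      have h2 : 0 ≤ ∫ s in t..T, φ s := intervalIntegral.integral_nonneg ht.2 (fun s _ => hφ0 s)
      rw [hIT]; linarith [h1 ▸ h2]
    have hut : Real.exp (-(K*t)) * u t ≤ u 0 + IT := by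
      have : w t = Real.exp (-(K*t)) * u t - ∫ s in (0:ℝ)..t, φ s := rfl
      rw [this, hw0v] at hw0
      linarith
    have hexpKt : Real.exp (K*t) ≤ Real.exp (K*T) :=
      Real.exp_le_exp.mpr (mul_le_mul_of_nonneg_left ht.2 hK)
    have hutv : u t = Real.exp (K*t) * (Real.exp (-(K*t)) * u t) := by
      rw [← mul_assoc, ← Real.exp_add]
      simp
    have h5 : u t ≤ Real.exp (K*t) * (u 0 + IT) := by
      rw [hutv]
      exact mul_le_mul_of_nonneg_left hut (Real.exp_pos _).le
    have h6 : u t ≤ Real.exp (K*T) * (u 0 + IT) := by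
      apply h5.trans
      apply mul_le_mul_of_nonneg_right hexpKt
      positivity
    have h7 : Real.sqrt (E t) ≤ u t := Real.sqrt_le_sqrt (by linarith)
    exact h7.trans h6
  -- remove ε
  apply le_of_forall_pos_le_add
  intro ε' hε'
  have hexp_pos : 0 < Real.exp (K*T) := Real.exp_pos _
  set ε : ℝ := (ε' / Real.exp (K*T))^2 with hεdef
  have hεpos : 0 < ε := by positivity
  have h1 := main ε hεpos
  have h2 : Real.sqrt (E 0 + ε) ≤ Real.sqrt (E 0) + Real.sqrt ε := by
    have h3 : E 0 + ε ≤ (Real.sqrt (E 0) + Real.sqrt ε)^2 := by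
      have := Real.sq_sqrt (hEnn 0)
      have := Real.sq_sqrt hεpos.le
      nlinarith [Real.sqrt_nonneg (E 0), Real.sqrt_nonneg ε]
    calc Real.sqrt (E 0 + ε) ≤ Real.sqrt ((Real.sqrt (E 0) + Real.sqrt ε)^2) :=
          Real.sqrt_le_sqrt h3
    _ = Real.sqrt (E 0) + Real.sqrt ε := by
          rw [Real.sqrt_sq (by positivity)]
  have h4 : Real.sqrt ε = ε' / Real.exp (K*T) := by
    rw [hεdef, Real.sqrt_sq (by positivity)]
  calc Real.sqrt (E t) ≤ Real.exp (K*T) * (Real.sqrt (E 0 + ε) + IT) := h1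
  _ ≤ Real.exp (K*T) * ((Real.sqrt (E 0) + Real.sqrt ε) + IT) := by
        apply mul_le_mul_of_nonneg_left _ hexp_pos.le
        linarith
  _ = Real.exp (K*T) * (Real.sqrt (E 0) + IT) + Real.exp (K*T) * Real.sqrt ε := by ring
  _ = Real.exp (K*T) * (Real.sqrt (E 0) + IT) + ε' := by
        rw [h4]
        field_simp



lemma ae_Icc_of_Ioo {L : ℝ} {Pr : ℝ → Prop} (h : ∀ y ∈ Ioo (0:ℝ) L, Pr y) :
    ∀ᵐ y ∂(volume.restrict (Icc (0:ℝ) L)), Pr y := by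
  rw [← Measure.restrict_congr_set Ioo_ae_eq_Icc]
  exact (ae_restrict_mem measurableSet_Ioo).mono h

lemma integral_congr_Ioo {L : ℝ} (hL : 0 ≤ L) {f g : ℝ → ℝ}
    (h : ∀ x ∈ Ioo (0:ℝ) L, f x = g x) :
    ∫ x in (0:ℝ)..L, f x = ∫ x in (0:ℝ)..L, g x := by
  apply intervalIntegral.integral_congr_ae
  have hL0 : ∀ᵐ x ∂(volume : Measure ℝ), x ≠ L := by
    rw [ae_iff]
    have : {x : ℝ | ¬ x ≠ L} = {L} := by ext x; simp
    rw [this]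
    exact Real.volume_singleton
  filter_upwards [hL0] with x hx hxI
  rw [uIoc_of_le hL] at hxI
  exact h x ⟨hxI.1, lt_of_le_of_ne hxI.2 hx⟩

lemma integral_comb4 {g1 g2 g3 g4 : ℝ → ℝ} {a b : ℝ}
    (h1 : IntervalIntegrable g1 volume a b) (h2 : IntervalIntegrable g2 volume a b)
    (h3 : IntervalIntegrable g3 volume a b) (h4 : IntervalIntegrable g4 volume a b)
    (c1 c2 c3 c4 : ℝ) :
    ∫ x in a..b, (c1 * g1 x + c2 * g2 x + c3 * g3 x + c4 * g4 x)
      = c1 * (∫ x in a..b, g1 x) + c2 * (∫ x in a..b, g2 x)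
        + c3 * (∫ x in a..b, g3 x) + c4 * (∫ x in a..b, g4 x) := by
  rw [intervalIntegral.integral_add (((h1.const_mul c1).add (h2.const_mul c2)).add
      (h3.const_mul c3)) (h4.const_mul c4),
    intervalIntegral.integral_add ((h1.const_mul c1).add (h2.const_mul c2)) (h3.const_mul c3),
    intervalIntegral.integral_add (h1.const_mul c1) (h2.const_mul c2),
    intervalIntegral.integral_const_mul, intervalIntegral.integral_const_mul,
    intervalIntegral.integral_const_mul, intervalIntegral.integral_const_mul]

lemma integral_comb2 {g1 g2 : ℝ → ℝ} {a b : ℝ}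
    (h1 : IntervalIntegrable g1 volume a b) (h2 : IntervalIntegrable g2 volume a b)
    (c1 c2 : ℝ) :
    ∫ x in a..b, (c1 * g1 x + c2 * g2 x)
      = c1 * (∫ x in a..b, g1 x) + c2 * (∫ x in a..b, g2 x) := by
  rw [intervalIntegral.integral_add (h1.const_mul c1) (h2.const_mul c2),
    intervalIntegral.integral_const_mul, intervalIntegral.integral_const_mul]

-- iteratedDeriv unfolding test
example (g : ℝ → ℝ) (x : ℝ) : iteratedDeriv 3 g x = deriv (deriv (deriv g)) x := by
  rw [show (3:ℕ) = 2 + 1 from rfl, iteratedDeriv_succ,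
    show (2:ℕ) = 1 + 1 from rfl, iteratedDeriv_succ, iteratedDeriv_one]

example (g : ℝ → ℝ) (y : ℝ) : iteratedDeriv 2 g y = deriv (deriv g) y := by
  rw [show (2:ℕ) = 1 + 1 from rfl, iteratedDeriv_succ, iteratedDeriv_one]

lemma hasDerivAt_param2 {G G' : ℝ → ℝ → ℝ → ℝ}
    (hG : Continuous fun q : ℝ × ℝ × ℝ => G q.1 q.2.1 q.2.2)
    (hG' : Continuous fun q : ℝ × ℝ × ℝ => G' q.1 q.2.1 q.2.2)
    (hd : ∀ x y s, HasDerivAt (fun τ => G x y τ) (G' x y s) s) (L t₀ : ℝ) :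
    HasDerivAt (fun s => ∫ x in (0:ℝ)..L, ∫ y in (0:ℝ)..L, G x y s)
      (∫ x in (0:ℝ)..L, ∫ y in (0:ℝ)..L, G' x y t₀) t₀ := by
  apply hasDerivAt_param (G := fun x s => ∫ y in (0:ℝ)..L, G x y s)
    (G' := fun x s => ∫ y in (0:ℝ)..L, G' x y s)
  · exact cont_param2 hG 0 L
  · exact cont_param2 hG' 0 L
  · intro x s
    apply hasDerivAt_param
      (hG.comp (continuous_const.prodMk continuous_id : Continuous fun p : ℝ × ℝ => (x, p)))
      (hG'.comp (continuous_const.prodMk continuous_id : Continuous fun p : ℝ × ℝ => (x, p)))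
    intro y s'
    exact hd x y s'


lemma young_aux {l f g : ℝ} (hl : 0 < l) : f*g ≤ (l/2)*f^2 + (1/(2*l))*g^2 := by
  rw [← sub_nonneg]
  have heq : (l/2)*f^2 + (1/(2*l))*g^2 - f*g = (l*f - g)^2/(2*l) := by
    field_simp
    ring
  rw [heq]
  positivity

lemma cont_slice1 {G : E3 → ℝ} (hG : Continuous G) (y t : ℝ) :
    Continuous fun x => G (x,y,t) :=
  hG.comp (continuous_id.prodMk continuous_const)

lemma cont_slice2 {G : E3 → ℝ} (hG : Continuous G) (x t : ℝ) :
    Continuous fun y => G (x,y,t) :=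
  hG.comp (continuous_const.prodMk (continuous_id.prodMk continuous_const))

lemma cont_fix3 {G : E3 → ℝ} (hG : Continuous G) (t : ℝ) :
    Continuous fun p : ℝ × ℝ => G (p.1,p.2,t) :=
  hG.comp (continuous_fst.prodMk (continuous_snd.prodMk continuous_const))

lemma cont_param_fix {H : ℝ → ℝ → ℝ → ℝ}
    (hH : Continuous fun q : ℝ × ℝ × ℝ => H q.1 q.2.1 q.2.2) (c d τ : ℝ) :
    Continuous fun x => ∫ y in c..d, H x y τ :=
  (cont_param2 hH c d).comp (continuous_id.prodMk continuous_const)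

lemma cont_param3 {H : ℝ → ℝ → ℝ → ℝ}
    (hH : Continuous fun q : ℝ × ℝ × ℝ => H q.1 q.2.1 q.2.2) (c d c' d' : ℝ) :
    Continuous fun τ => ∫ x in c..d, ∫ y in c'..d', H x y τ := by
  have hW : Continuous fun p : ℝ × ℝ => ∫ y in c'..d', H p.1 y p.2 := cont_param2 hH c' d'
  have h1 : Continuous fun q : ℝ × ℝ => ((q.2, q.1) : ℝ × ℝ) := by fun_prop
  have h2 := hW.comp h1
  simp only [Function.comp_def] at h2
  exact intervalIntegral.continuous_parametric_intervalIntegral_of_continuous' (μ := volume)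
    (f := fun (τ x : ℝ) => ∫ y in c'..d', H x y τ) h2 c d

set_option maxHeartbeats 2000000 in
/-- Well-posedness estimate for the linear μ-system with a
source term: for `t ∈ [0,T]`,
`‖(ζ(t), ζ(t-h·))‖_H ≤ e^{(ξ‖a‖_∞/(2h))T} (‖(ζ₀,z₀)‖_H + ∫₀ᵀ ‖f(s)‖_{L²} ds)`. -/
theorem linear_mu_source_estimate
    (L α γ h μ₁ μ₂ ξ Ma T : ℝ) (a : ℝ → ℝ → ℝ) (f : ℝ → ℝ → ℝ → ℝ)
    (hL : 0 < L) (hα : 0 < α) (hγ : 0 < γ) (hh : 0 < h)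
    (hμ₂ : 0 < μ₂) (hμ : μ₂ < μ₁)
    (ha : Coeff a) (hMa : IsEssSupOn L a Ma)
    (hξ₁ : h * μ₂ < ξ) (hξ₂ : ξ < h * (2*μ₁ - μ₂))
    (hT : 0 < T)
    (hf : Continuous (fun p : ℝ × ℝ × ℝ => f p.1 p.2.1 p.2.2)) :
    ∀ ζ : ℝ → ℝ → ℝ → ℝ, IsLinMuSolF L α γ h μ₁ μ₂ a f ζ →
      ∀ t ∈ Icc (0:ℝ) T,
        Real.sqrt (Hn2 L (ξ*Ma) (fun x y => ζ x y t) (fun x y ρ => ζ x y (t - ρ*h)))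
          ≤ Real.exp ((ξ*Ma/(2*h)) * T) *
            (Real.sqrt (Hn2 L (ξ*Ma) (fun x y => ζ x y 0)
                (fun x y ρ => ζ x y (-(ρ*h))))
             + ∫ s in (0:ℝ)..T,
                 Real.sqrt (∫ x in (0:ℝ)..L, ∫ y in (0:ℝ)..L, (f x y s)^2)) := by
  intro ζ hζ t ht
  obtain ⟨hsm, hbc, hpde⟩ := hζ
  set F : E3 → ℝ := fun p => ζ p.1 p.2.1 p.2.2 with hFdef
  have hF : ContDiff ℝ (⊤ : ℕ∞) F := hsm
  -- directional derivatives
  set u1 : E3 → ℝ := Dv (1,0,0) F with hu1def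
  set u2 : E3 → ℝ := Dv (0,1,0) F with hu2def
  set ut : E3 → ℝ := Dv (0,0,1) F with hutdef
  set u11 : E3 → ℝ := Dv (1,0,0) u1 with hu11def
  set u111 : E3 → ℝ := Dv (1,0,0) u11 with hu111def
  set u22 : E3 → ℝ := Dv (0,1,0) u2 with hu22def
  set u122 : E3 → ℝ := Dv (1,0,0) u22 with hu122def
  set u12 : E3 → ℝ := Dv (1,0,0) u2 with hu12def
  have hu1CD : ContDiff ℝ (⊤ : ℕ∞) u1 := Dv_contDiff hF _
  have hu2CD : ContDiff ℝ (⊤ : ℕ∞) u2 := Dv_contDiff hF _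
  have hutCD : ContDiff ℝ (⊤ : ℕ∞) ut := Dv_contDiff hF _
  have hu11CD : ContDiff ℝ (⊤ : ℕ∞) u11 := Dv_contDiff hu1CD _
  have hu111CD : ContDiff ℝ (⊤ : ℕ∞) u111 := Dv_contDiff hu11CD _
  have hu22CD : ContDiff ℝ (⊤ : ℕ∞) u22 := Dv_contDiff hu2CD _
  have hu122CD : ContDiff ℝ (⊤ : ℕ∞) u122 := Dv_contDiff hu22CD _
  have hu12CD : ContDiff ℝ (⊤ : ℕ∞) u12 := Dv_contDiff hu2CD _
  have hFc : Continuous F := hF.continuous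
  have hu1c : Continuous u1 := hu1CD.continuous
  have hu2c : Continuous u2 := hu2CD.continuous
  have hutc : Continuous ut := hutCD.continuous
  have hu111c : Continuous u111 := hu111CD.continuous
  have hu122c : Continuous u122 := hu122CD.continuous
  have hu12c : Continuous u12 := hu12CD.continuous
  -- conversions of the curried partial derivatives
  have hpX : ∀ x y τ, pX ζ x y τ = u1 (x,y,τ) := fun x y τ =>
    (hasDerivAt_slice1 hF x y τ).deriv
  have hpY : ∀ x y τ, pY ζ x y τ = u2 (x,y,τ) := fun x y τ =>
    (hasDerivAt_slice2 hF x y τ).deriv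
  have hpT : ∀ x y τ, pT ζ x y τ = ut (x,y,τ) := fun x y τ =>
    (hasDerivAt_slice3 hF x y τ).deriv
  have hd1 : ∀ y τ, deriv (fun s => F (s,y,τ)) = fun s => u1 (s,y,τ) := fun y τ =>
    funext fun s => (hasDerivAt_slice1 hF s y τ).deriv
  have hd11 : ∀ y τ, deriv (fun s => u1 (s,y,τ)) = fun s => u11 (s,y,τ) := fun y τ =>
    funext fun s => (hasDerivAt_slice1 hu1CD s y τ).deriv
  have hpX3 : ∀ x y τ, pX3 ζ x y τ = u111 (x,y,τ) := by
    intro x y τ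
    show iteratedDeriv 3 (fun s => F (s,y,τ)) x = u111 (x,y,τ)
    rw [show (3:ℕ) = 2 + 1 from rfl, iteratedDeriv_succ,
      show (2:ℕ) = 1 + 1 from rfl, iteratedDeriv_succ, iteratedDeriv_one,
      hd1 y τ, hd11 y τ]
    exact (hasDerivAt_slice1 hu11CD x y τ).deriv
  have hd2 : ∀ x τ, deriv (fun r => F (x,r,τ)) = fun r => u2 (x,r,τ) := fun x τ =>
    funext fun r => (hasDerivAt_slice2 hF x r τ).deriv
  have hit2 : ∀ x y τ, iteratedDeriv 2 (fun r => F (x,r,τ)) y = u22 (x,y,τ) := by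
    intro x y τ
    rw [show (2:ℕ) = 1 + 1 from rfl, iteratedDeriv_succ, iteratedDeriv_one, hd2 x τ]
    exact (hasDerivAt_slice2 hu2CD x y τ).deriv
  have hpXYY : ∀ x y τ, pXYY ζ x y τ = u122 (x,y,τ) := by
    intro x y τ
    show deriv (fun s => iteratedDeriv 2 (fun r => F (s,r,τ)) y) x = u122 (x,y,τ)
    have : (fun s => iteratedDeriv 2 (fun r => F (s,r,τ)) y) = fun s => u22 (s,y,τ) :=
      funext fun s => hit2 s y τ
    rw [this]
    exact (hasDerivAt_slice1 hu22CD x y τ).deriv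
  -- PDE in directional form
  have hPDE : ∀ x ∈ Ioo (0:ℝ) L, ∀ y ∈ Ioo (0:ℝ) L, ∀ τ, 0 < τ →
      ut (x,y,τ) = f x y τ - α * u111 (x,y,τ) - γ * u122 (x,y,τ)
        - a x y * (μ₁ * F (x,y,τ) + μ₂ * F (x,y,τ-h)) := by
    intro x hx y hy τ hτ
    have h0 := hpde x hx y hy τ hτ
    rw [hpT, hpX3, hpXYY] at h0
    show ut (x,y,τ) = f x y τ - α * u111 (x,y,τ) - γ * u122 (x,y,τ)
        - a x y * (μ₁ * ζ x y τ + μ₂ * ζ x y (τ-h))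
    linarith
  -- boundary conditions
  have hbc0 : ∀ τ, 0 < τ → ∀ y ∈ Ioo (0:ℝ) L, F (0,y,τ) = 0 :=
    fun τ hτ y hy => ((hbc τ hτ).1 y hy).1
  have hbcL : ∀ τ, 0 < τ → ∀ y ∈ Ioo (0:ℝ) L, F (L,y,τ) = 0 :=
    fun τ hτ y hy => ((hbc τ hτ).1 y hy).2.1
  have hbcX : ∀ τ, 0 < τ → ∀ y ∈ Ioo (0:ℝ) L, u1 (L,y,τ) = 0 := by
    intro τ hτ y hy
    have h0 := ((hbc τ hτ).1 y hy).2.2.1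
    rw [hpX] at h0
    exact h0
  have hbcY : ∀ τ, 0 < τ → ∀ y ∈ Ioo (0:ℝ) L, u2 (L,y,τ) = 0 := by
    intro τ hτ y hy
    have h0 := ((hbc τ hτ).1 y hy).2.2.2
    rw [hpY] at h0
    exact h0
  have hbcB0 : ∀ τ, 0 < τ → ∀ x ∈ Ioo (0:ℝ) L, F (x,0,τ) = 0 :=
    fun τ hτ x hx => ((hbc τ hτ).2 x hx).1
  have hbcBL : ∀ τ, 0 < τ → ∀ x ∈ Ioo (0:ℝ) L, F (x,L,τ) = 0 :=
    fun τ hτ x hx => ((hbc τ hτ).2 x hx).2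
  have hu2at0 : ∀ τ, 0 < τ → ∀ y ∈ Ioo (0:ℝ) L, u2 (0,y,τ) = 0 := by
    intro τ hτ y hy
    have hev : (fun r => F (0,r,τ)) =ᶠ[nhds y] (fun _ => (0:ℝ)) := by
      filter_upwards [Ioo_mem_nhds hy.1 hy.2] with r hr using hbc0 τ hτ r hr
    have h0 := hev.deriv_eq
    rw [deriv_const] at h0
    rw [hu2def, ← (hasDerivAt_slice2 hF 0 y τ).deriv]
    exact h0
  -- energies
  set P : ℝ → ℝ := fun τ => ∫ x in (0:ℝ)..L, ∫ y in (0:ℝ)..L, (ζ x y τ)^2 with hPdef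
  set Q : ℝ → ℝ → ℝ → ℝ := fun x y τ => ∫ ρ in (0:ℝ)..1, (ζ x y (τ - ρ*h))^2 with hQdef
  set Qi : ℝ → ℝ := fun τ => ∫ x in (0:ℝ)..L, ∫ y in (0:ℝ)..L, Q x y τ with hQidef
  set En : ℝ → ℝ := fun τ => P τ + (ξ*Ma) * Qi τ with hEndef
  set φ : ℝ → ℝ := fun s => Real.sqrt (∫ x in (0:ℝ)..L, ∫ y in (0:ℝ)..L, (f x y s)^2)
    with hφdef
  set K : ℝ := ξ*Ma/(2*h) with hKdef
  have hMa0 : 0 ≤ Ma := glb_nonneg hL ha.2.1 hMa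
  have hξ0 : 0 < ξ := lt_trans (by positivity) hξ₁
  have hK0 : 0 ≤ K := by rw [hKdef]; positivity
  -- nonnegativity
  have hPnn : ∀ τ, 0 ≤ P τ := fun τ =>
    intervalIntegral.integral_nonneg hL.le fun x _ =>
      intervalIntegral.integral_nonneg hL.le fun y _ => sq_nonneg _
  have hQinn : ∀ τ, 0 ≤ Qi τ := fun τ =>
    intervalIntegral.integral_nonneg hL.le fun x _ =>
      intervalIntegral.integral_nonneg hL.le fun y _ =>
        intervalIntegral.integral_nonneg zero_le_one fun ρ _ => sq_nonneg _
  have hEnn : ∀ τ, 0 ≤ En τ := fun τ => by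
    have := hPnn τ; have := hQinn τ; have : 0 ≤ (ξ*Ma) * Qi τ := by positivity
    rw [hEndef]; dsimp only; linarith [hPnn τ]
  have hPE : ∀ τ, P τ ≤ En τ := fun τ => by
    have : 0 ≤ (ξ*Ma) * Qi τ := by have := hQinn τ; positivity
    rw [hEndef]; dsimp only; linarith
  -- derivative of P
  have hsq3 : Continuous fun q : E3 => (ζ q.1 q.2.1 q.2.2)^2 := hFc.pow 2
  have hP' : ∀ τ, HasDerivAt P
      (∫ x in (0:ℝ)..L, ∫ y in (0:ℝ)..L, 2 * ζ x y τ * ut (x,y,τ)) τ := by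
    intro τ
    apply hasDerivAt_param2 (G := fun x y s => (ζ x y s)^2)
      (G' := fun x y s => 2 * ζ x y s * ut (x,y,s)) hsq3
      (by exact (continuous_const.mul hFc).mul hutc) _ L τ
    intro x y s
    have h0 := (hasDerivAt_slice3 hF x y s).pow 2
    refine h0.congr_deriv ?_
    simp [hFdef, hutdef]
  -- derivative of Qi
  have hVd : ∀ x y τ, HasDerivAt (fun σ => ∫ s in (0:ℝ)..σ, (ζ x y s)^2) ((ζ x y τ)^2) τ := by
    intro x y τ
    have hc : Continuous fun s => (ζ x y s)^2 := by
      have := cont_slice2 (hFc.pow 2) x τ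
      exact (hFc.comp (continuous_const.prodMk (continuous_const.prodMk continuous_id))).pow 2
    exact intervalIntegral.integral_hasDerivAt_right (hc.intervalIntegrable _ _)
      (hc.stronglyMeasurableAtFilter _ _) hc.continuousAt
  have hQrep : ∀ x y τ, Q x y τ = (1/h) * ((∫ s in (0:ℝ)..τ, (ζ x y s)^2)
      - ∫ s in (0:ℝ)..(τ-h), (ζ x y s)^2) := by
    intro x y τ
    have hc : Continuous fun s => (ζ x y s)^2 :=
      (hFc.comp (continuous_const.prodMk (continuous_const.prodMk continuous_id))).pow 2
    have e1 : Q x y τ = ∫ ρ in (0:ℝ)..1, (fun s => (ζ x y s)^2) (τ - h*ρ) := by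
      rw [hQdef]
      apply intervalIntegral.integral_congr
      intro ρ _
      dsimp only
      rw [mul_comm]
    have e3 := intervalIntegral.integral_comp_sub_mul (a := (0:ℝ)) (b := 1)
      (fun s => (ζ x y s)^2) hh.ne' τ
    rw [e1, e3]
    rw [intervalIntegral.integral_interval_sub_left (hc.intervalIntegrable _ _)
      (hc.intervalIntegrable _ _)]
    simp [smul_eq_mul]
  have hQd : ∀ x y τ, HasDerivAt (fun σ => Q x y σ)
      ((1/h) * ((ζ x y τ)^2 - (ζ x y (τ-h))^2)) τ := by
    intro x y τ
    have hfun : (fun σ => Q x y σ) = fun σ => (1/h) * ((∫ s in (0:ℝ)..σ, (ζ x y s)^2)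
        - ∫ s in (0:ℝ)..(σ-h), (ζ x y s)^2) := funext fun σ => hQrep x y σ
    rw [hfun]
    have h1 := hVd x y τ
    have h2 : HasDerivAt (fun σ => ∫ s in (0:ℝ)..(σ-h), (ζ x y s)^2) ((ζ x y (τ-h))^2) τ := by
      have h3 := (hVd x y (τ-h)).comp τ ((hasDerivAt_id τ).sub_const h)
      refine h3.congr_deriv ?_
      ring
    exact (h1.sub h2).const_mul (1/h)
  have hVc2 : Continuous fun p : (ℝ × ℝ) × ℝ => ∫ s in (0:ℝ)..p.2, (ζ p.1.1 p.1.2 s)^2 := by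
    exact intervalIntegral.continuous_parametric_primitive_of_continuous (μ := volume)
      (f := fun (pr : ℝ × ℝ) (s : ℝ) => (ζ pr.1 pr.2 s)^2) (a₀ := 0)
      ((hFc.comp ((continuous_fst.comp continuous_fst).prodMk
        ((continuous_snd.comp continuous_fst).prodMk continuous_snd))).pow 2)
  have hQc : Continuous fun q : E3 => Q q.1 q.2.1 q.2.2 := by
    have hfun : (fun q : E3 => Q q.1 q.2.1 q.2.2) = fun q : E3 =>
        (1/h) * ((∫ s in (0:ℝ)..q.2.2, (ζ q.1 q.2.1 s)^2)
          - ∫ s in (0:ℝ)..(q.2.2-h), (ζ q.1 q.2.1 s)^2) :=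
      funext fun q => hQrep q.1 q.2.1 q.2.2
    rw [hfun]
    apply continuous_const.mul
    apply Continuous.sub
    · have m : Continuous fun q : E3 => (((q.1, q.2.1), q.2.2) : (ℝ × ℝ) × ℝ) := by fun_prop
      have h2 := hVc2.comp m
      simp only [Function.comp_def] at h2
      exact h2
    · have m : Continuous fun q : E3 => (((q.1, q.2.1), q.2.2 - h) : (ℝ × ℝ) × ℝ) := by
        fun_prop
      have h2 := hVc2.comp m
      simp only [Function.comp_def] at h2
      exact h2
  have hQi' : ∀ τ, HasDerivAt Qi ((1/h) * (P τ - P (τ-h))) τ := by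
    intro τ
    have h0 := hasDerivAt_param2 (G := fun x y σ => Q x y σ)
      (G' := fun x y σ => (1/h) * ((ζ x y σ)^2 - (ζ x y (σ-h))^2)) hQc
      (by
        apply continuous_const.mul
        exact (hsq3.sub ((hFc.comp ((continuous_fst).prodMk
          ((continuous_fst.comp continuous_snd).prodMk
            ((continuous_snd.comp continuous_snd).sub continuous_const)))).pow 2)))
      (fun x y s => hQd x y s) L τ
    convert h0 using 1
    have hinner : ∀ x, (∫ y in (0:ℝ)..L, (1/h) * ((ζ x y τ)^2 - (ζ x y (τ-h))^2))
        = (1/h) * ((∫ y in (0:ℝ)..L, (ζ x y τ)^2) - ∫ y in (0:ℝ)..L, (ζ x y (τ-h))^2) := by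
      intro x
      rw [intervalIntegral.integral_const_mul, intervalIntegral.integral_sub
        (f := fun y => (ζ x y τ)^2) (g := fun y => (ζ x y (τ-h))^2)
        ((cont_slice2 (hFc.pow 2) x τ).intervalIntegrable _ _)
        ((cont_slice2 (hFc.pow 2) x (τ-h)).intervalIntegrable _ _)]
    simp only [hinner]
    have i1 : IntervalIntegrable (fun x => ∫ y in (0:ℝ)..L, (ζ x y τ)^2) volume 0 L :=
      (cont_param_fix (H := fun x y s => (ζ x y s)^2) hsq3 0 L τ).intervalIntegrable _ _
    have i2 : IntervalIntegrable (fun x => ∫ y in (0:ℝ)..L, (ζ x y (τ-h))^2) volume 0 L :=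
      (cont_param_fix (H := fun x y s => (ζ x y s)^2) hsq3 0 L (τ-h)).intervalIntegrable _ _
    have e4 : (∫ x in (0:ℝ)..L, (1/h) * ((∫ y in (0:ℝ)..L, (ζ x y τ)^2)
        - ∫ y in (0:ℝ)..L, (ζ x y (τ-h))^2))
        = (1/h) * (P τ - P (τ-h)) := by
      rw [intervalIntegral.integral_const_mul]
      congr 1
      exact intervalIntegral.integral_sub i1 i2
    exact e4.symm
  -- derivative of the energy
  have hEd' : ∀ τ, HasDerivAt En
      ((∫ x in (0:ℝ)..L, ∫ y in (0:ℝ)..L, 2 * ζ x y τ * ut (x,y,τ))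
        + (ξ*Ma) * ((1/h) * (P τ - P (τ-h)))) τ := fun τ =>
    (hP' τ).add ((hQi' τ).const_mul (ξ*Ma))
  -- continuity of φ
  have hfsq : Continuous fun q : E3 => (f q.1 q.2.1 q.2.2)^2 := hf.pow 2
  have hφc : Continuous φ := by
    rw [hφdef]
    exact Real.continuous_sqrt.comp (cont_param3 (H := fun x y s => (f x y s)^2) hfsq 0 L 0 L)
  have hφ0 : ∀ s, 0 ≤ φ s := fun s => Real.sqrt_nonneg _
  -- the key differential inequality
  have hkey : ∀ τ, 0 < τ →
      ((∫ x in (0:ℝ)..L, ∫ y in (0:ℝ)..L, 2 * ζ x y τ * ut (x,y,τ))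
        + (ξ*Ma) * ((1/h) * (P τ - P (τ-h))))
      ≤ 2*K*En τ + 2*φ τ*Real.sqrt (En τ) := by
    intro τ hτ
    -- the dispersive term in x is nonnegative after integration by parts
    have hAinner : ∀ y ∈ Ioo (0:ℝ) L,
        (∫ x in (0:ℝ)..L, F (x,y,τ) * u111 (x,y,τ)) = (1/2) * (u1 (0,y,τ))^2 := by
      intro y hy
      have hFTC := intervalIntegral.integral_eq_sub_of_hasDerivAt
        (f := fun x => F (x,y,τ) * u11 (x,y,τ) - (1/2) * (u1 (x,y,τ))^2)
        (f' := fun x => F (x,y,τ) * u111 (x,y,τ)) (a := 0) (b := L)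
        (fun x _ => by
          have h1 := hasDerivAt_slice1 hF x y τ
          have h2 := hasDerivAt_slice1 hu11CD x y τ
          have h3 := hasDerivAt_slice1 hu1CD x y τ
          have h4 := (h1.mul h2).sub ((h3.pow 2).const_mul (1/2))
          refine h4.congr_deriv ?_
          ring)
        (((cont_slice1 hFc y τ).mul (cont_slice1 hu111c y τ)).intervalIntegrable _ _)
      rw [hFTC, hbcL τ hτ y hy, hbc0 τ hτ y hy, hbcX τ hτ y hy]
      ring
    have hA : 0 ≤ ∫ x in (0:ℝ)..L, ∫ y in (0:ℝ)..L, F (x,y,τ) * u111 (x,y,τ) := by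
      rw [swap_cont (F := fun x y => F (x,y,τ) * u111 (x,y,τ))
        (by exact (cont_fix3 hFc τ).mul (cont_fix3 hu111c τ)) hL.le]
      apply intervalIntegral.integral_nonneg_of_ae_restrict hL.le
      apply ae_Icc_of_Ioo fun y hy => ?_
      dsimp only
      rw [hAinner y hy]
      positivity
    -- the mixed dispersive term vanishes
    have hBinner : ∀ x ∈ Ioo (0:ℝ) L,
        (∫ y in (0:ℝ)..L, F (x,y,τ) * u122 (x,y,τ))
          = - ∫ y in (0:ℝ)..L, u2 (x,y,τ) * u12 (x,y,τ) := by
      intro x hx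
      have hFTC := intervalIntegral.integral_eq_sub_of_hasDerivAt
        (f := fun y => F (x,y,τ) * u12 (x,y,τ))
        (f' := fun y => u2 (x,y,τ) * u12 (x,y,τ) + F (x,y,τ) * u122 (x,y,τ)) (a := 0) (b := L)
        (fun y _ => by
          have h1 := hasDerivAt_slice2 hF x y τ
          have h2 := hasDerivAt_slice2 hu12CD x y τ
          have heq : Dv (0,1,0) u12 (x,y,τ) = u122 (x,y,τ) := by
            rw [hu12def, hu122def, hu22def]
            exact Dv_comm hu2CD _ _ _
          rw [heq] at h2
          exact h1.mul h2)
        (((((cont_slice2 hu2c x τ).mul (cont_slice2 hu12c x τ))).add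
          ((cont_slice2 hFc x τ).mul (cont_slice2 hu122c x τ))).intervalIntegrable _ _)
      rw [hbcBL τ hτ x hx, hbcB0 τ hτ x hx] at hFTC
      simp only [zero_mul, sub_zero] at hFTC
      have hsplit := intervalIntegral.integral_add
        (f := fun y => u2 (x,y,τ) * u12 (x,y,τ)) (g := fun y => F (x,y,τ) * u122 (x,y,τ))
        (((cont_slice2 hu2c x τ).mul (cont_slice2 hu12c x τ)).intervalIntegrable
          (μ := volume) 0 L)
        (((cont_slice2 hFc x τ).mul (cont_slice2 hu122c x τ)).intervalIntegrable
          (μ := volume) 0 L)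
      rw [hsplit] at hFTC
      linarith
    have hB : (∫ x in (0:ℝ)..L, ∫ y in (0:ℝ)..L, F (x,y,τ) * u122 (x,y,τ)) = 0 := by
      rw [integral_congr_Ioo hL.le hBinner]
      have hz : (∫ x in (0:ℝ)..L, ∫ y in (0:ℝ)..L, u2 (x,y,τ) * u12 (x,y,τ)) = 0 := by
        rw [swap_cont (F := fun x y => u2 (x,y,τ) * u12 (x,y,τ))
          (by exact (cont_fix3 hu2c τ).mul (cont_fix3 hu12c τ)) hL.le]
        rw [integral_congr_Ioo hL.le (g := fun _ => (0:ℝ)) ?_, intervalIntegral.integral_zero]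
        intro y hy
        have hFTC := intervalIntegral.integral_eq_sub_of_hasDerivAt
          (f := fun x => (1/2) * (u2 (x,y,τ))^2)
          (f' := fun x => u2 (x,y,τ) * u12 (x,y,τ)) (a := 0) (b := L)
          (fun x _ => by
            have h3 := hasDerivAt_slice1 hu2CD x y τ
            have h4 := (h3.pow 2).const_mul (1/2)
            refine h4.congr_deriv ?_
            rw [hu12def]
            ring)
          (((cont_slice1 hu2c y τ).mul (cont_slice1 hu12c y τ)).intervalIntegrable _ _)
        rw [hFTC, hbcY τ hτ y hy, hu2at0 τ hτ y hy]
        ring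
      have : (∫ x in (0:ℝ)..L, -∫ y in (0:ℝ)..L, u2 (x,y,τ) * u12 (x,y,τ))
          = - ∫ x in (0:ℝ)..L, ∫ y in (0:ℝ)..L, u2 (x,y,τ) * u12 (x,y,τ) :=
        intervalIntegral.integral_neg
      rw [this, hz, neg_zero]
    -- source term estimate (Cauchy-Schwarz via Young)
    have hfPnn : 0 ≤ ∫ x in (0:ℝ)..L, ∫ y in (0:ℝ)..L, (f x y τ)^2 :=
      intervalIntegral.integral_nonneg hL.le fun x _ =>
        intervalIntegral.integral_nonneg hL.le fun y _ => sq_nonneg _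
    have hIF : (∫ x in (0:ℝ)..L, ∫ y in (0:ℝ)..L, f x y τ * ζ x y τ)
        ≤ φ τ * Real.sqrt (P τ) := by
      rw [hφdef]
      apply le_sqrt_mul_sqrt hfPnn (hPnn τ)
      intro l hl
      have hi1 : ∀ x : ℝ, IntervalIntegrable (fun y => f x y τ * ζ x y τ) volume 0 L :=
        fun x => ((cont_slice2 hf x τ).mul (cont_slice2 hFc x τ)).intervalIntegrable _ _
      have hi2 : ∀ x : ℝ, IntervalIntegrable
          (fun y => (l/2) * (f x y τ)^2 + (1/(2*l)) * (ζ x y τ)^2) volume 0 L :=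
        fun x => ((continuous_const.mul (cont_slice2 hfsq x τ)).add
          (continuous_const.mul (cont_slice2 hsq3 x τ))).intervalIntegrable _ _
      have mono1 : (∫ x in (0:ℝ)..L, ∫ y in (0:ℝ)..L, f x y τ * ζ x y τ)
          ≤ ∫ x in (0:ℝ)..L, ∫ y in (0:ℝ)..L,
              ((l/2) * (f x y τ)^2 + (1/(2*l)) * (ζ x y τ)^2) := by
        have hc1 : Continuous fun q : E3 => f q.1 q.2.1 q.2.2 * ζ q.1 q.2.1 q.2.2 :=
          hf.mul hFc
        have hc2 : Continuous fun q : E3 =>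
            ((l/2) * (f q.1 q.2.1 q.2.2)^2 + (1/(2*l)) * (ζ q.1 q.2.1 q.2.2)^2) :=
          (continuous_const.mul hfsq).add (continuous_const.mul hsq3)
        apply intervalIntegral.integral_mono_on hL.le
          ((cont_param_fix (H := fun x y s => f x y s * ζ x y s) hc1 0 L τ).intervalIntegrable _ _)
          ((cont_param_fix (H := fun x y s => (l/2) * (f x y s)^2 + (1/(2*l)) * (ζ x y s)^2) hc2 0 L τ).intervalIntegrable _ _)
        intro x _
        apply intervalIntegral.integral_mono_on hL.le (hi1 x) (hi2 x)
        intro y _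
        exact young_aux hl
      have split1 : ∀ x : ℝ, (∫ y in (0:ℝ)..L,
          ((l/2) * (f x y τ)^2 + (1/(2*l)) * (ζ x y τ)^2))
          = (l/2) * (∫ y in (0:ℝ)..L, (f x y τ)^2)
            + (1/(2*l)) * ∫ y in (0:ℝ)..L, (ζ x y τ)^2 := fun x =>
        integral_comb2 ((cont_slice2 hfsq x τ).intervalIntegrable _ _)
          ((cont_slice2 hsq3 x τ).intervalIntegrable _ _) _ _
      have split2 : (∫ x in (0:ℝ)..L, ∫ y in (0:ℝ)..L,
          ((l/2) * (f x y τ)^2 + (1/(2*l)) * (ζ x y τ)^2))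
          = (l/2) * (∫ x in (0:ℝ)..L, ∫ y in (0:ℝ)..L, (f x y τ)^2)
            + (1/(2*l)) * P τ := by
        simp only [split1]
        exact integral_comb2 ((cont_param_fix (H := fun x y s => (f x y s)^2) hfsq 0 L τ).intervalIntegrable _ _)
          ((cont_param_fix (H := fun x y s => (ζ x y s)^2) hsq3 0 L τ).intervalIntegrable _ _) _ _
      rw [split2] at mono1
      apply mono1.trans
      apply le_of_eq
      have hl' : l ≠ 0 := hl.ne'
      field_simp
    -- pointwise estimate and integration
    have hstep : (∫ x in (0:ℝ)..L, ∫ y in (0:ℝ)..L, 2 * ζ x y τ * ut (x,y,τ))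
        ≤ (-2*α) * (∫ x in (0:ℝ)..L, ∫ y in (0:ℝ)..L, F (x,y,τ) * u111 (x,y,τ))
          + (-2*γ) * (∫ x in (0:ℝ)..L, ∫ y in (0:ℝ)..L, F (x,y,τ) * u122 (x,y,τ))
          + (μ₂*Ma) * P (τ-h)
          + 2 * ∫ x in (0:ℝ)..L, ∫ y in (0:ℝ)..L, f x y τ * ζ x y τ := by
      have hFhc : Continuous fun q : E3 => ζ q.1 q.2.1 (q.2.2 - h) := by
        have m : Continuous fun q : E3 => ((q.1, q.2.1, q.2.2 - h) : E3) := by fun_prop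
        have h2 := hFc.comp m
        simp only [Function.comp_def] at h2
        exact h2
      have hR2c : Continuous fun q : E3 =>
          ((-2*α) * (F (q.1,q.2.1,q.2.2) * u111 (q.1,q.2.1,q.2.2))
            + (-2*γ) * (F (q.1,q.2.1,q.2.2) * u122 (q.1,q.2.1,q.2.2))
            + (μ₂*Ma) * ((ζ q.1 q.2.1 (q.2.2-h))^2)
            + 2 * (f q.1 q.2.1 q.2.2 * ζ q.1 q.2.1 q.2.2)) := by
        have c1 : Continuous fun q : E3 => F (q.1,q.2.1,q.2.2) := by
          exact hFc.comp (by fun_prop)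
        have c2 : Continuous fun q : E3 => u111 (q.1,q.2.1,q.2.2) :=
          hu111c.comp (by fun_prop)
        have c3 : Continuous fun q : E3 => u122 (q.1,q.2.1,q.2.2) :=
          hu122c.comp (by fun_prop)
        exact (((continuous_const.mul (c1.mul c2)).add
          (continuous_const.mul (c1.mul c3))).add
          (continuous_const.mul (hFhc.pow 2))).add
          (continuous_const.mul (hf.mul hFc))
      -- pointwise inequality
      have claim1 : ∀ x ∈ Ioo (0:ℝ) L, ∀ y ∈ Ioo (0:ℝ) L, a x y ≤ Ma →
          2 * ζ x y τ * ut (x,y,τ)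
            ≤ (-2*α) * (F (x,y,τ) * u111 (x,y,τ)) + (-2*γ) * (F (x,y,τ) * u122 (x,y,τ))
              + (μ₂*Ma) * ((ζ x y (τ-h))^2) + 2 * (f x y τ * ζ x y τ) := by
        intro x hx y hy hyM
        rw [hPDE x hx y hy τ hτ]
        have hnn := ha.2.1 x y
        have t1 : 0 ≤ (2*μ₁ - μ₂) * a x y * (ζ x y τ)^2 := by
          apply mul_nonneg (mul_nonneg (by linarith) hnn) (sq_nonneg _)
        have t2 : 0 ≤ μ₂ * (Ma - a x y) * (ζ x y (τ-h))^2 :=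
          mul_nonneg (mul_nonneg hμ₂.le (by linarith)) (sq_nonneg _)
        have t3 : 0 ≤ μ₂ * a x y * (ζ x y τ + ζ x y (τ-h))^2 :=
          mul_nonneg (mul_nonneg hμ₂.le hnn) (sq_nonneg _)
        have hFeq : ∀ σ : ℝ, F (x,y,σ) = ζ x y σ := fun σ => rfl
        rw [hFeq, hFeq]
        nlinarith [t1, t2, t3]
      -- integrate in y, a.e. in x
      have hxa : ∀ᵐ x ∂(volume.restrict (Icc (0:ℝ) L)),
          (∫ y in (0:ℝ)..L, 2 * ζ x y τ * ut (x,y,τ))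
            ≤ ∫ y in (0:ℝ)..L,
              ((-2*α) * (F (x,y,τ) * u111 (x,y,τ)) + (-2*γ) * (F (x,y,τ) * u122 (x,y,τ))
                + (μ₂*Ma) * ((ζ x y (τ-h))^2) + 2 * (f x y τ * ζ x y τ)) := by
        filter_upwards [ae_slice_le hMa,
          ae_Icc_of_Ioo (fun x (hx : x ∈ Ioo (0:ℝ) L) => hx)] with x hxM hxIoo
        apply intervalIntegral.integral_mono_ae_restrict hL.le
          (((continuous_const.mul (cont_slice2 hFc x τ)).mul
            (cont_slice2 hutc x τ)).intervalIntegrable _ _)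
          (((((continuous_const.mul ((cont_slice2 hFc x τ).mul (cont_slice2 hu111c x τ))).add
            (continuous_const.mul ((cont_slice2 hFc x τ).mul (cont_slice2 hu122c x τ)))).add
            (continuous_const.mul ((cont_slice2 hFc x (τ-h)).pow 2))).add
            (continuous_const.mul ((cont_slice2 hf x τ).mul
              (cont_slice2 hFc x τ)))).intervalIntegrable _ _)
        filter_upwards [hxM, ae_Icc_of_Ioo (fun y (hy : y ∈ Ioo (0:ℝ) L) => hy)]
          with y hyM hyIoo
        exact claim1 x hxIoo y hyIoo hyM
      -- integrate in x
      have houter : (∫ x in (0:ℝ)..L, ∫ y in (0:ℝ)..L, 2 * ζ x y τ * ut (x,y,τ))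
          ≤ ∫ x in (0:ℝ)..L, ∫ y in (0:ℝ)..L,
              ((-2*α) * (F (x,y,τ) * u111 (x,y,τ)) + (-2*γ) * (F (x,y,τ) * u122 (x,y,τ))
                + (μ₂*Ma) * ((ζ x y (τ-h))^2) + 2 * (f x y τ * ζ x y τ)) := by
        apply intervalIntegral.integral_mono_ae_restrict hL.le
          ((cont_param_fix (H := fun x y s => 2 * ζ x y s * ut (x,y,s))
            (by exact (continuous_const.mul hFc).mul hutc) 0 L τ).intervalIntegrable _ _)
          ((cont_param_fix (H := fun x y s =>
              ((-2*α) * (F (x,y,s) * u111 (x,y,s)) + (-2*γ) * (F (x,y,s) * u122 (x,y,s))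
                + (μ₂*Ma) * ((ζ x y (s-h))^2) + 2 * (f x y s * ζ x y s)))
            hR2c 0 L τ).intervalIntegrable _ _)
          hxa
      -- split the right-hand side
      have hsplitin : ∀ x : ℝ, (∫ y in (0:ℝ)..L,
          ((-2*α) * (F (x,y,τ) * u111 (x,y,τ)) + (-2*γ) * (F (x,y,τ) * u122 (x,y,τ))
            + (μ₂*Ma) * ((ζ x y (τ-h))^2) + 2 * (f x y τ * ζ x y τ)))
          = (-2*α) * (∫ y in (0:ℝ)..L, F (x,y,τ) * u111 (x,y,τ))
            + (-2*γ) * (∫ y in (0:ℝ)..L, F (x,y,τ) * u122 (x,y,τ))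
            + (μ₂*Ma) * (∫ y in (0:ℝ)..L, (ζ x y (τ-h))^2)
            + 2 * ∫ y in (0:ℝ)..L, f x y τ * ζ x y τ := fun x =>
        integral_comb4
          (((cont_slice2 hFc x τ).mul (cont_slice2 hu111c x τ)).intervalIntegrable _ _)
          (((cont_slice2 hFc x τ).mul (cont_slice2 hu122c x τ)).intervalIntegrable _ _)
          (((cont_slice2 hFc x (τ-h)).pow 2).intervalIntegrable _ _)
          (((cont_slice2 hf x τ).mul (cont_slice2 hFc x τ)).intervalIntegrable _ _) _ _ _ _
      have hsplit : (∫ x in (0:ℝ)..L, ∫ y in (0:ℝ)..L,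
          ((-2*α) * (F (x,y,τ) * u111 (x,y,τ)) + (-2*γ) * (F (x,y,τ) * u122 (x,y,τ))
            + (μ₂*Ma) * ((ζ x y (τ-h))^2) + 2 * (f x y τ * ζ x y τ)))
          = (-2*α) * (∫ x in (0:ℝ)..L, ∫ y in (0:ℝ)..L, F (x,y,τ) * u111 (x,y,τ))
            + (-2*γ) * (∫ x in (0:ℝ)..L, ∫ y in (0:ℝ)..L, F (x,y,τ) * u122 (x,y,τ))
            + (μ₂*Ma) * (∫ x in (0:ℝ)..L, ∫ y in (0:ℝ)..L, (ζ x y (τ-h))^2)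
            + 2 * ∫ x in (0:ℝ)..L, ∫ y in (0:ℝ)..L, f x y τ * ζ x y τ := by
        simp only [hsplitin]
        exact integral_comb4
          ((cont_param_fix (H := fun x y s => F (x,y,s) * u111 (x,y,s))
            (by exact hFc.mul hu111c) 0 L τ).intervalIntegrable _ _)
          ((cont_param_fix (H := fun x y s => F (x,y,s) * u122 (x,y,s))
            (by exact hFc.mul hu122c) 0 L τ).intervalIntegrable _ _)
          ((cont_param_fix (H := fun x y s => (ζ x y (s-h))^2)
            (by exact hFhc.pow 2) 0 L τ).intervalIntegrable _ _)
          ((cont_param_fix (H := fun x y s => f x y s * ζ x y s)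
            (by exact hf.mul hFc) 0 L τ).intervalIntegrable _ _) _ _ _ _
      rw [hsplit] at houter
      have hPh : P (τ-h) = ∫ x in (0:ℝ)..L, ∫ y in (0:ℝ)..L, (ζ x y (τ-h))^2 := rfl
      rw [hPh]
      exact houter
    have h1 : (-2*α) * (∫ x in (0:ℝ)..L, ∫ y in (0:ℝ)..L, F (x,y,τ) * u111 (x,y,τ)) ≤ 0 := by
      nlinarith [hA]
    have hsPE : Real.sqrt (P τ) ≤ Real.sqrt (En τ) := Real.sqrt_le_sqrt (hPE τ)
    have h2 : (∫ x in (0:ℝ)..L, ∫ y in (0:ℝ)..L, f x y τ * ζ x y τ)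
        ≤ φ τ * Real.sqrt (En τ) :=
      hIF.trans (mul_le_mul_of_nonneg_left hsPE (hφ0 τ))
    have hμξ : μ₂ ≤ ξ/h := by
      rw [le_div_iff₀ hh]
      linarith [hξ₁]
    have h3 : (μ₂*Ma) * P (τ-h) + (ξ*Ma) * ((1/h) * (P τ - P (τ-h)))
        ≤ (ξ*Ma/h) * P τ := by
      have hPh := hPnn (τ-h)
      have e1 : (ξ*Ma) * ((1/h) * (P τ - P (τ-h)))
          = (ξ*Ma/h) * P τ - (ξ/h)*Ma * P (τ-h) := by
        field_simp
      rw [e1]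
      have : (μ₂*Ma) * P (τ-h) ≤ (ξ/h)*Ma * P (τ-h) := by
        apply mul_le_mul_of_nonneg_right _ hPh
        exact mul_le_mul_of_nonneg_right hμξ hMa0
      linarith
    have h4 : (ξ*Ma/h) * P τ ≤ 2*K*En τ := by
      rw [hKdef]
      have e2 : 2*(ξ*Ma/(2*h)) = ξ*Ma/h := by field_simp
      rw [e2]
      apply mul_le_mul_of_nonneg_left (hPE τ)
      positivity
    rw [hB] at hstep
    nlinarith [hstep, h1, h2, h3, h4, hφ0 τ, Real.sqrt_nonneg (En τ)]
  -- Gronwall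
  have hfinal := gronwall_aux hK0 hT hEnn hφc hφ0 hEd'
    (fun τ h0τ _ => hkey τ h0τ) t ht
  have hgoal1 : Hn2 L (ξ*Ma) (fun x y => ζ x y t) (fun x y ρ => ζ x y (t - ρ*h)) = En t := rfl
  have hgoal0 : Hn2 L (ξ*Ma) (fun x y => ζ x y 0) (fun x y ρ => ζ x y (-(ρ*h))) = En 0 := by
    have e0 : (fun x y ρ => ζ x y (-(ρ*h))) = fun (x y ρ : ℝ) => ζ x y (0 - ρ*h) := by
      funext x y ρ
      rw [zero_sub]
    rw [e0]
    rfl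
  rw [hgoal1, hgoal0]
  rw [hKdef] at hfinal
  exact hfinal
end
end
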